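/- arXiv:1904.03641 — 10 statements merged into one kernel-verified Lean document; each statement's English description precedes it below -/
import Mathlib

section
/- Let X be a real Hilbert space with unit sphere S_X, let C be a subset of X, and let N : C → S_X be a mapping. Then the following are equivalent: (1) there exists a convex body V of class C^{1,1} such that C ⊆ ∂V and N(x) is outwardly normal to ∂V at x for every x ∈ C; (2) there exists r > 0 such that ⟨N(y), y − x⟩ ≥ (r/2)·‖N(y) − N(x)‖² for all x, y ∈ C. Moreover, if (2) is satisfied with a constant r > 0, then the body V in (1) can be taken so that its outer unit normal map N_{∂V} : ∂V → S_X is r⁻¹-Lipschitz. -/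
open scoped RealInnerProductSpace
open Metric Set

variable {X : Type*} [NormedAddCommGroup X] [InnerProductSpace ℝ X]

/-- A convex body: a closed convex set with nonempty interior (not necessarily bounded). -/
def IsConvexBody (V : Set X) : Prop :=
  IsClosed V ∧ Convex ℝ V ∧ (interior V).Nonempty

/-- `u` is an outward unit normal to `∂V` at `x`. -/
def IsOutwardNormal (V : Set X) (x u : X) : Prop :=
  ‖u‖ = 1 ∧ ∀ y ∈ V, ⟪u, y - x⟫ ≤ 0

/-- `V` is a convex body of class `C^{1,1}` whose outer unit normal (Gauss) map is `NS`,
with `NS` being `L`-Lipschitz on the boundary: at every boundary point the outward unit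
normal exists and is unique, and it is given by `NS`. -/
def IsC11BodyWith (V : Set X) (NS : X → X) (L : ℝ) : Prop :=
  IsConvexBody V ∧
  (∀ x ∈ frontier V, IsOutwardNormal V x (NS x) ∧ ∀ u, IsOutwardNormal V x u → u = NS x) ∧
  (∀ x ∈ frontier V, ∀ y ∈ frontier V, ‖NS x - NS y‖ ≤ L * ‖x - y‖)

lemma exists_proj' [CompleteSpace X] {V : Set X} (hne : V.Nonempty) (hc : IsClosed V)
    (hcv : Convex ℝ V) (z : X) : ∃ p ∈ V, ∀ w ∈ V, ⟪z - p, w - p⟫ ≤ 0 := by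
  obtain ⟨p, hpV, hp⟩ := exists_norm_eq_iInf_of_complete_convex hne hc.isComplete hcv z
  exact ⟨p, hpV, (norm_eq_iInf_iff_real_inner_le_zero hcv hpV).1 hp⟩

lemma unit_inner' (u v : X) (hu : ‖u‖ = 1) (hv : ‖v‖ = 1) :
    ‖v - u‖ ^ 2 = 2 - 2 * ⟪u, v⟫ := by
  have h := norm_sub_sq_real v u
  rw [real_inner_comm u v] at h
  rw [h, hu, hv]; ring

lemma sq_le_helper' {a b : ℝ} (ha : 0 ≤ a) (hb : 0 ≤ b) (h : a ^ 2 ≤ b * a) : a ≤ b := by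
  rcases ha.eq_or_lt with h0 | h0
  · rw [← h0]; exact hb
  · nlinarith

lemma fwd' [CompleteSpace X] {V : Set X} {NS : X → X} {L : ℝ}
    (hcl : IsClosed V) (hcv : Convex ℝ V)
    (huniq : ∀ x ∈ frontier V, ∀ u, IsOutwardNormal V x u → u = NS x)
    (hlip : ∀ x ∈ frontier V, ∀ y ∈ frontier V, ‖NS x - NS y‖ ≤ L * ‖x - y‖)
    {x y : X} (hx : x ∈ frontier V) (hy : y ∈ frontier V)
    {u v : X} (hu : IsOutwardNormal V x u) (hv : IsOutwardNormal V y v) :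
    ⟪v, y - x⟫ ≥ (2 * max L 1)⁻¹ / 2 * ‖v - u‖ ^ 2 := by
  set L' := max L 1 with hL'def
  have hL1 : (1:ℝ) ≤ L' := le_max_right _ _
  have hL0 : (0:ℝ) < L' := by linarith
  set r : ℝ := (2 * L')⁻¹ with hrdef
  have hr : 0 < r := by positivity
  have hLr : L' * r = 1/2 := by rw [hrdef]; field_simp
  have hxV : x ∈ V := hcl.frontier_subset hx
  have hyV : y ∈ V := hcl.frontier_subset hy
  set ξ : X := x + r • (v - u) with hξdef
  set m : ℝ := ‖v - u‖ with hmdef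
  have hm0 : (0:ℝ) ≤ m := norm_nonneg _
  have hmsq : m ^ 2 = 2 - 2 * ⟪u, v⟫ := unit_inner' u v hu.1 hv.1
  have hξx : ξ - x = r • (v - u) := by rw [hξdef]; abel
  have hnξx : ‖ξ - x‖ = r * m := by
    rw [hξx, norm_smul, Real.norm_eq_abs, abs_of_pos hr, ← hmdef]
  have hξV : ξ ∈ V := by
    by_contra hout
    obtain ⟨p, hpV, hproj⟩ := exists_proj' ⟨x, hxV⟩ hcl hcv ξ
    set d : ℝ := ‖ξ - p‖ with hddef
    have hd : 0 < d := by
      rw [hddef, norm_pos_iff, sub_ne_zero]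
      rintro rfl; exact hout hpV
    set μ : X := d⁻¹ • (ξ - p) with hμdef
    have hμn : ‖μ‖ = 1 := by
      rw [hμdef, norm_smul, Real.norm_eq_abs, abs_inv, abs_of_pos hd, ← hddef]
      exact inv_mul_cancel₀ hd.ne'
    have hμnormal : IsOutwardNormal V p μ := by
      refine ⟨hμn, fun w hw => ?_⟩
      rw [hμdef, real_inner_smul_left]
      have h1 := hproj w hw
      have h2 : (0:ℝ) ≤ d⁻¹ := by positivity
      nlinarith
    have hpfr : p ∈ frontier V := by
      rw [hcl.frontier_eq]
      refine ⟨hpV, fun hint => ?_⟩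
      obtain ⟨ε, hε, hball⟩ := Metric.isOpen_iff.1 isOpen_interior p hint
      set t : ℝ := min 1 (ε / (2 * d)) with htdef
      have ht0 : 0 < t := lt_min one_pos (by positivity)
      have ht1 : t * d < ε := by
        have h1 : t ≤ ε / (2 * d) := min_le_right _ _
        have h2 : t * d ≤ ε / (2 * d) * d := mul_le_mul_of_nonneg_right h1 hd.le
        have h3 : ε / (2 * d) * d = ε / 2 := by field_simp
        rw [h3] at h2
        linarith
      have hqV : p + t • (ξ - p) ∈ V := by
        apply interior_subset
        apply hball
        rw [mem_ball, dist_eq_norm, add_sub_cancel_left, norm_smul, Real.norm_eq_abs,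
          abs_of_pos ht0, ← hddef]
        exact ht1
      have h3 := hproj _ hqV
      rw [add_sub_cancel_left, real_inner_smul_right, real_inner_self_eq_norm_sq, ← hddef] at h3
      have h4 : 0 < t * d ^ 2 := by positivity
      linarith
    have hμNS : μ = NS p := huniq p hpfr μ hμnormal
    have huNS : u = NS x := huniq x hx u hu
    have hlip1 : ‖μ - u‖ ≤ L' * ‖p - x‖ := by
      rw [hμNS, huNS]
      calc ‖NS p - NS x‖ ≤ L * ‖p - x‖ := hlip p hpfr x hx
        _ ≤ L' * ‖p - x‖ := mul_le_mul_of_nonneg_right (le_max_left _ _) (norm_nonneg _)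
    have hnx : ‖p - x‖ ≤ ‖ξ - x‖ := by
      have h1 := hproj x hxV
      have h2 : (x - ξ) + (ξ - p) = x - p := by abel
      have h3 : ⟪x - p, x - p⟫ = ⟪x - ξ, x - p⟫ + ⟪ξ - p, x - p⟫ := by
        rw [← inner_add_left, h2]
      have h4 := real_inner_le_norm (x - ξ) (x - p)
      have h5 : ‖x - p‖ ^ 2 ≤ ‖x - ξ‖ * ‖x - p‖ := by
        rw [← real_inner_self_eq_norm_sq]; linarith
      have h6 := sq_le_helper' (norm_nonneg (x - p)) (norm_nonneg (x - ξ)) h5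
      rw [norm_sub_rev p x, norm_sub_rev ξ x]
      exact h6
    have hG : ‖p - x‖ ≤ r * m := hnξx ▸ hnx
    have hA : ⟪μ, ξ - p⟫ = d := by
      rw [hμdef, real_inner_smul_left, real_inner_self_eq_norm_sq, ← hddef]
      field_simp
    have hB : ⟪μ, ξ - p⟫ = ⟪μ, ξ - x⟫ + ⟪μ, x - p⟫ := by
      rw [← inner_add_right]
      congr 1
      abel
    have hC : ⟪μ, x - p⟫ ≤ 0 := hμnormal.2 x hxV
    have hD2 : ⟪μ, ξ - x⟫ = ⟪u, ξ - x⟫ + ⟪μ - u, ξ - x⟫ := by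
      rw [inner_sub_left]; ring
    have hE : ⟪u, ξ - x⟫ = r * (⟪u, v⟫ - 1) := by
      rw [hξx, real_inner_smul_right, inner_sub_right, real_inner_self_eq_norm_sq, hu.1]
      norm_num
    have hF : ⟪μ - u, ξ - x⟫ ≤ (L' * ‖p - x‖) * (r * m) := by
      calc ⟪μ - u, ξ - x⟫ ≤ ‖μ - u‖ * ‖ξ - x‖ := real_inner_le_norm _ _
        _ ≤ (L' * ‖p - x‖) * (r * m) := by
            rw [hnξx]
            exact mul_le_mul_of_nonneg_right hlip1 (by positivity)
    have hH : (L' * ‖p - x‖) * (r * m) ≤ (L' * (r * m)) * (r * m) :=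
      mul_le_mul_of_nonneg_right (mul_le_mul_of_nonneg_left hG hL0.le) (by positivity)
    have hK : L' * (r * m) * (r * m) = 1/2 * (r * m ^ 2) := by
      linear_combination (r * m ^ 2) * hLr
    have hM : r * (⟪u, v⟫ - 1) = -(1/2) * (r * m ^ 2) := by
      linear_combination (r / 2) * hmsq
    linarith
  have hfin := hv.2 ξ hξV
  have h7 : ξ - y = (x - y) + r • (v - u) := by rw [hξdef]; abel
  rw [h7] at hfin
  have hvv : ⟪v, v⟫ = (1:ℝ) := by rw [real_inner_self_eq_norm_sq, hv.1]; norm_num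
  have hvu : ⟪v, u⟫ = ⟪u, v⟫ := real_inner_comm _ _
  simp only [inner_add_right, inner_sub_right, real_inner_smul_right] at hfin
  rw [hvv, hvu] at hfin
  have hgoal : ⟪v, y - x⟫ = ⟪v, y⟫ - ⟪v, x⟫ := inner_sub_right _ _ _
  rw [ge_iff_le, hgoal]
  have hM2 : r * (1 - ⟪u, v⟫) = r / 2 * m ^ 2 := by linear_combination (-(r / 2)) * hmsq
  linarith

lemma bwd' [CompleteSpace X] (C : Set X) (N : X → X) (hN : ∀ x ∈ C, ‖N x‖ = 1)
    (r : ℝ) (hr : 0 < r)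
    (hcond : ∀ x ∈ C, ∀ y ∈ C, ⟪N y, y - x⟫ ≥ r / 2 * ‖N y - N x‖ ^ 2) :
    ∃ (V : Set X) (NS : X → X), IsC11BodyWith V NS r⁻¹ ∧ C ⊆ frontier V ∧
      ∀ x ∈ C, IsOutwardNormal V x (N x) := by
  rcases C.eq_empty_or_nonempty with hC | hCne
  · subst hC
    refine ⟨univ, fun _ => 0, ⟨⟨isClosed_univ, convex_univ, ⟨0, by simp⟩⟩, ?_, ?_⟩, ?_, ?_⟩
    · simp [frontier_univ]
    · simp [frontier_univ]
    · simp
    · simp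
  obtain ⟨x₀, hx₀⟩ := hCne
  classical
  set E : Set X := {e | ∀ z ∈ C, ⟪N z, e - (z - r • N z)⟫ ≤ 0} with hEdef
  have hmemE : ∀ {e : X}, e ∈ E → ∀ z ∈ C, ⟪N z, e - (z - r • N z)⟫ ≤ 0 := fun h => h
  have hEconv : Convex ℝ E := by
    intro e₁ h₁ e₂ h₂ a b ha hb hab
    intro z hz
    have hc0 : z - r • N z = a • (z - r • N z) + b • (z - r • N z) := by
      rw [← add_smul, hab, one_smul]
    have hvec : (a • e₁ + b • e₂) - (z - r • N z)
        = a • (e₁ - (z - r • N z)) + b • (e₂ - (z - r • N z)) := by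
      nth_rewrite 1 [hc0]
      module
    rw [hvec, inner_add_right, real_inner_smul_right, real_inner_smul_right]
    have q1 := hmemE h₁ z hz
    have q2 := hmemE h₂ z hz
    have q1' : a * ⟪N z, e₁ - (z - r • N z)⟫ ≤ 0 := by nlinarith
    have q2' : b * ⟪N z, e₂ - (z - r • N z)⟫ ≤ 0 := by nlinarith
    linarith
  have hEclosed : IsClosed E := by
    have hrw : E = ⋂ z ∈ C, {e : X | ⟪N z, e - (z - r • N z)⟫ ≤ 0} := by
      ext e; simp [hEdef]
    rw [hrw]
    exact isClosed_biInter fun z hz =>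
      isClosed_le (continuous_const.inner (continuous_id.sub continuous_const)) continuous_const
  have hcenter : ∀ x ∈ C, x - r • N x ∈ E := by
    intro x hx z hz
    have hvec : (x - r • N x) - (z - r • N z) = (x - z) + r • (N z - N x) := by
      rw [smul_sub]; abel
    rw [hvec]
    simp only [inner_add_right, inner_sub_right, real_inner_smul_right]
    have h1 := hcond x hx z hz
    have h2 : ‖N z - N x‖ ^ 2 = 2 - 2 * ⟪N x, N z⟫ := unit_inner' _ _ (hN x hx) (hN z hz)
    have h3 : ⟪N z, N z⟫ = (1:ℝ) := by rw [real_inner_self_eq_norm_sq, hN z hz]; norm_num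
    have h4 : ⟪N z, N x⟫ = ⟪N x, N z⟫ := real_inner_comm _ _
    rw [h2] at h1
    have h5 : ⟪N z, z - x⟫ = ⟪N z, z⟫ - ⟪N z, x⟫ := inner_sub_right _ _ _
    rw [h5] at h1
    rw [h3, h4]
    linarith
  have hEne : E.Nonempty := ⟨x₀ - r • N x₀, hcenter x₀ hx₀⟩
  choose P hPmem hPle using fun z : X => exists_proj' hEne hEclosed hEconv z
  set D : X → ℝ := fun z => ‖z - P z‖ with hDdef
  have hDmin : ∀ (z : X), ∀ e ∈ E, D z ≤ ‖z - e‖ := by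
    intro z e he
    have h1 : ⟪z - P z, e - P z⟫ ≤ 0 := hPle z e he
    have h2 : z - e = (z - P z) + (P z - e) := by abel
    have h3 : ‖z - e‖ ^ 2 = ‖z - P z‖ ^ 2 + 2 * ⟪z - P z, P z - e⟫ + ‖P z - e‖ ^ 2 := by
      rw [h2]; exact norm_add_sq_real _ _
    have h4 : ⟪z - P z, P z - e⟫ = -⟪z - P z, e - P z⟫ := by
      rw [← inner_neg_right]; congr 1; abel
    have h5 : D z ^ 2 ≤ ‖z - e‖ ^ 2 := by
      simp only [hDdef]
      nlinarith [sq_nonneg ‖P z - e‖]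
    exact le_of_pow_le_pow_left₀ two_ne_zero (norm_nonneg _) h5
  have hDlip : ∀ z z', D z ≤ D z' + ‖z - z'‖ := by
    intro z z'
    calc D z ≤ ‖z - P z'‖ := hDmin z (P z') (hPmem z')
      _ = ‖(z - z') + (z' - P z')‖ := by congr 1; abel
      _ ≤ ‖z - z'‖ + ‖z' - P z'‖ := norm_add_le _ _
      _ = D z' + ‖z - z'‖ := by simp only [hDdef]; ring
  have hDcont : Continuous D := by
    have hlw : LipschitzWith 1 D := by
      apply LipschitzWith.of_dist_le_mul
      intro z z'
      rw [Real.dist_eq, dist_eq_norm, NNReal.coe_one, one_mul]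
      have h1 := hDlip z z'
      have h2 := hDlip z' z
      have h3 : ‖z' - z‖ = ‖z - z'‖ := norm_sub_rev _ _
      rw [abs_le]
      constructor <;> [linarith; linarith]
    exact hlw.continuous
  have hDzero : ∀ e ∈ E, D e = 0 := by
    intro e he
    have h1 := hDmin e e he
    simp only [sub_self, norm_zero] at h1
    exact le_antisymm h1 (norm_nonneg _)
  set V : Set X := {z | D z ≤ r} with hVdef
  have hmemV : ∀ {z : X}, z ∈ V ↔ D z ≤ r := fun {z} => Iff.rfl
  have hVclosed : IsClosed V := isClosed_le hDcont continuous_const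
  have hVconv : Convex ℝ V := by
    intro z hz z' hz' a b ha hb hab
    have hmem : a • P z + b • P z' ∈ E := hEconv (hPmem z) (hPmem z') ha hb hab
    have h1 : D (a • z + b • z') ≤ ‖(a • z + b • z') - (a • P z + b • P z')‖ :=
      hDmin _ _ hmem
    have h2 : (a • z + b • z') - (a • P z + b • P z') = a • (z - P z) + b • (z' - P z') := by
      rw [smul_sub, smul_sub]; abel
    have h3 : ‖a • (z - P z) + b • (z' - P z')‖ ≤ a * D z + b * D z' := by
      calc ‖a • (z - P z) + b • (z' - P z')‖
          ≤ ‖a • (z - P z)‖ + ‖b • (z' - P z')‖ := norm_add_le _ _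
        _ = a * D z + b * D z' := by
            rw [norm_smul, norm_smul, Real.norm_eq_abs, Real.norm_eq_abs,
              abs_of_nonneg ha, abs_of_nonneg hb]
    have hz1 : D z ≤ r := hz
    have hz2 : D z' ≤ r := hz'
    show D (a • z + b • z') ≤ r
    calc D (a • z + b • z') ≤ a * D z + b * D z' := by rw [h2] at h1; linarith
      _ ≤ a * r + b * r :=
        add_le_add (mul_le_mul_of_nonneg_left hz1 ha) (mul_le_mul_of_nonneg_left hz2 hb)
      _ = r := by rw [← add_mul, hab, one_mul]
  have hsub : {z | D z < r} ⊆ interior V :=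
    interior_maximal (fun z hz => show D z ≤ r from le_of_lt hz)
      (isOpen_lt hDcont continuous_const)
  have hintne : (interior V).Nonempty := by
    refine ⟨x₀ - r • N x₀, hsub ?_⟩
    show D (x₀ - r • N x₀) < r
    rw [hDzero _ (hcenter x₀ hx₀)]
    exact hr
  have hfrontD : ∀ z ∈ frontier V, D z = r := by
    intro z hz
    have h1 : z ∈ V := hVclosed.frontier_subset hz
    have h2 : z ∉ interior V := by
      rw [hVclosed.frontier_eq] at hz; exact hz.2
    by_contra hne
    exact h2 (hsub (lt_of_le_of_ne h1 hne))
  set NS : X → X := fun z => r⁻¹ • (z - P z) with hNSdef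
  have hfrn : ∀ z ∈ frontier V, ‖z - P z‖ = r := fun z hz => hfrontD z hz
  have hnormal : ∀ z ∈ frontier V, IsOutwardNormal V z (NS z) := by
    intro z hz
    have hzn : ‖z - P z‖ = r := hfrn z hz
    constructor
    · show ‖r⁻¹ • (z - P z)‖ = 1
      rw [norm_smul, Real.norm_eq_abs, abs_inv, abs_of_pos hr, hzn, inv_mul_cancel₀ hr.ne']
    · intro w hw
      have hq : ‖w - P w‖ ≤ r := hw
      show ⟪r⁻¹ • (z - P z), w - z⟫ ≤ 0
      rw [real_inner_smul_left]
      have hinv : (0:ℝ) ≤ r⁻¹ := by positivity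
      have hkey : ⟪z - P z, w - z⟫ ≤ 0 := by
        have hsplit : w - z = (w - P w) + ((P w - P z) + (P z - z)) := by abel
        rw [hsplit, inner_add_right, inner_add_right]
        have b1 : ⟪z - P z, w - P w⟫ ≤ r * r := by
          calc ⟪z - P z, w - P w⟫ ≤ ‖z - P z‖ * ‖w - P w‖ := real_inner_le_norm _ _
            _ ≤ r * r := by rw [hzn]; exact mul_le_mul_of_nonneg_left hq hr.le
        have b2 : ⟪z - P z, P w - P z⟫ ≤ 0 := hPle z (P w) (hPmem w)
        have b3 : ⟪z - P z, P z - z⟫ = -(r * r) := by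
          rw [show P z - z = -(z - P z) by abel, inner_neg_right,
            real_inner_self_eq_norm_sq, hzn]
          ring
        linarith
      nlinarith
  have huniq : ∀ z ∈ frontier V, ∀ u, IsOutwardNormal V z u → u = NS z := by
    intro z hz u hu
    have hzn : ‖z - P z‖ = r := hfrn z hz
    have hwV : P z + r • u ∈ V := by
      show D (P z + r • u) ≤ r
      calc D (P z + r • u) ≤ ‖(P z + r • u) - P z‖ := hDmin _ _ (hPmem z)
        _ = r := by
            rw [add_sub_cancel_left, norm_smul, Real.norm_eq_abs, abs_of_pos hr, hu.1, mul_one]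
    have h1 := hu.2 _ hwV
    have h2 : (P z + r • u) - z = r • u - (z - P z) := by abel
    rw [h2, inner_sub_right, real_inner_smul_right, real_inner_self_eq_norm_sq, hu.1] at h1
    norm_num at h1
    have h4 : ‖(z - P z) - r • u‖ ^ 2
        = ‖z - P z‖ ^ 2 - 2 * ⟪z - P z, r • u⟫ + ‖r • u‖ ^ 2 := norm_sub_sq_real _ _
    have h5 : ⟪z - P z, r • u⟫ = r * ⟪u, z - P z⟫ := by
      rw [real_inner_smul_right, real_inner_comm]
    have h6 : ‖r • u‖ = r := by
      rw [norm_smul, Real.norm_eq_abs, abs_of_pos hr, hu.1, mul_one]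
    have h7 : ‖(z - P z) - r • u‖ ^ 2 ≤ 0 := by
      rw [h4, h5, h6, hzn]; nlinarith
    have h9 : ‖(z - P z) - r • u‖ = 0 := by
      have h8 := norm_nonneg ((z - P z) - r • u)
      nlinarith
    have h10 : z - P z = r • u := by
      have := norm_eq_zero.1 h9
      rwa [sub_eq_zero] at this
    show u = r⁻¹ • (z - P z)
    rw [h10, smul_smul, inv_mul_cancel₀ hr.ne', one_smul]
  have hlip : ∀ z ∈ frontier V, ∀ z' ∈ frontier V, ‖NS z - NS z'‖ ≤ r⁻¹ * ‖z - z'‖ := by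
    intro z hz z' hz'
    have key : ‖(z - P z) - (z' - P z')‖ ^ 2 ≤ ⟪(z - P z) - (z' - P z'), z - z'⟫ := by
      have k1 : ⟪z - P z, P z' - P z⟫ ≤ 0 := hPle z (P z') (hPmem z')
      have k2 : ⟪z' - P z', P z - P z'⟫ ≤ 0 := hPle z' (P z) (hPmem z)
      have k2' : ⟪z' - P z', P z' - P z⟫ = -⟪z' - P z', P z - P z'⟫ := by
        rw [← inner_neg_right]; congr 1; abel
      have k3 : ⟪(z - P z) - (z' - P z'), P z' - P z⟫ ≤ 0 := by
        rw [inner_sub_left]; rw [k2']; linarith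
      have k4 : P z' - P z = (z' - z) + ((z - P z) - (z' - P z')) := by abel
      rw [k4, inner_add_right, real_inner_self_eq_norm_sq] at k3
      have k5 : ⟪(z - P z) - (z' - P z'), z - z'⟫
          = -⟪(z - P z) - (z' - P z'), z' - z⟫ := by
        rw [← inner_neg_right]; congr 1; abel
      rw [k5]; linarith
    have key2 : ‖(z - P z) - (z' - P z')‖ ≤ ‖z - z'‖ := by
      have hcs := real_inner_le_norm ((z - P z) - (z' - P z')) (z - z')
      exact sq_le_helper' (norm_nonneg _) (norm_nonneg _) (by nlinarith)
    show ‖r⁻¹ • (z - P z) - r⁻¹ • (z' - P z')‖ ≤ r⁻¹ * ‖z - z'‖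
    rw [← smul_sub, norm_smul, Real.norm_eq_abs, abs_inv, abs_of_pos hr]
    exact mul_le_mul_of_nonneg_left key2 (by positivity)
  have hCV : ∀ x ∈ C, x ∈ V := by
    intro x hx
    show D x ≤ r
    calc D x ≤ ‖x - (x - r • N x)‖ := hDmin x _ (hcenter x hx)
      _ = r := by
          rw [sub_sub_cancel, norm_smul, Real.norm_eq_abs, abs_of_pos hr, hN x hx, mul_one]
  have hCfr : C ⊆ frontier V := by
    intro x hx
    rw [hVclosed.frontier_eq]
    refine ⟨hCV x hx, fun hint => ?_⟩
    obtain ⟨ε, hε, hball⟩ := Metric.isOpen_iff.1 isOpen_interior x hint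
    have hztV : x + (ε/2) • N x ∈ V := by
      apply interior_subset
      apply hball
      rw [mem_ball, dist_eq_norm, add_sub_cancel_left, norm_smul, Real.norm_eq_abs,
        abs_of_pos (by positivity), hN x hx, mul_one]
      linarith
    have hDz : D (x + (ε/2) • N x) ≤ r := hztV
    have hlow : ε/2 + r ≤ D (x + (ε/2) • N x) := by
      have h1 : ⟪N x, (x + (ε/2) • N x) - P (x + (ε/2) • N x)⟫
          ≤ ‖(x + (ε/2) • N x) - P (x + (ε/2) • N x)‖ := by
        have hcs := real_inner_le_norm (N x) ((x + (ε/2) • N x) - P (x + (ε/2) • N x))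
        rw [hN x hx, one_mul] at hcs
        exact hcs
      have hsplit : (x + (ε/2) • N x) - P (x + (ε/2) • N x)
          = (ε/2) • N x + (r • N x + ((x - r • N x) - P (x + (ε/2) • N x))) := by abel
      rw [hsplit, inner_add_right, inner_add_right, real_inner_smul_right,
        real_inner_smul_right, real_inner_self_eq_norm_sq, hN x hx] at h1
      have h2 : 0 ≤ ⟪N x, (x - r • N x) - P (x + (ε/2) • N x)⟫ := by
        have h3 := hmemE (hPmem (x + (ε/2) • N x)) x hx
        have h4 : (x - r • N x) - P (x + (ε/2) • N x)
            = -(P (x + (ε/2) • N x) - (x - r • N x)) := by abel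
        rw [h4, inner_neg_right]
        linarith
      norm_num at h1
      show ε/2 + r ≤ ‖(x + (ε/2) • N x) - P (x + (ε/2) • N x)‖
      rw [hsplit]
      linarith
    linarith
  have hCnormal : ∀ x ∈ C, IsOutwardNormal V x (N x) := by
    intro x hx
    refine ⟨hN x hx, fun w hw => ?_⟩
    have hq : ‖w - P w‖ ≤ r := hw
    have hsplit : w - x = (w - P w) + ((P w - (x - r • N x)) + (-(r • N x))) := by abel
    rw [hsplit, inner_add_right, inner_add_right, inner_neg_right, real_inner_smul_right,
      real_inner_self_eq_norm_sq, hN x hx]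
    have b1 : ⟪N x, w - P w⟫ ≤ r := by
      have hcs := real_inner_le_norm (N x) (w - P w)
      rw [hN x hx, one_mul] at hcs
      linarith
    have b2 : ⟪N x, P w - (x - r • N x)⟫ ≤ 0 := hmemE (hPmem w) x hx
    norm_num
    linarith
  exact ⟨V, NS, ⟨⟨hVclosed, hVconv, hintne⟩, fun z hz => ⟨hnormal z hz, huniq z hz⟩, hlip⟩,
    hCfr, hCnormal⟩

theorem prescribing_tangent_hyperplanes_C11_Hilbert [CompleteSpace X]
    (C : Set X) (N : X → X) (hN : ∀ x ∈ C, ‖N x‖ = 1) :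
    ((∃ (V : Set X) (NS : X → X) (L : ℝ), IsC11BodyWith V NS L ∧ C ⊆ frontier V ∧
        ∀ x ∈ C, IsOutwardNormal V x (N x)) ↔
      (∃ r > (0:ℝ), ∀ x ∈ C, ∀ y ∈ C,
        ⟪N y, y - x⟫ ≥ r / 2 * ‖N y - N x‖ ^ 2)) ∧
    (∀ r > (0:ℝ), (∀ x ∈ C, ∀ y ∈ C, ⟪N y, y - x⟫ ≥ r / 2 * ‖N y - N x‖ ^ 2) →
      ∃ (V : Set X) (NS : X → X), IsC11BodyWith V NS r⁻¹ ∧ C ⊆ frontier V ∧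
        ∀ x ∈ C, IsOutwardNormal V x (N x)) := by
  constructor
  · constructor
    · rintro ⟨V, NS, L, ⟨⟨hcl, hcv, -⟩, hns, hlip⟩, hCfr, hCnorm⟩
      refine ⟨(2 * max L 1)⁻¹, by positivity, fun x hx y hy => ?_⟩
      exact fwd' hcl hcv (fun z hz => (hns z hz).2) hlip (hCfr hx) (hCfr hy)
        (hCnorm x hx) (hCnorm y hy)
    · rintro ⟨r, hr, hcond⟩
      obtain ⟨V, NS, hbody, hCfr, hCnorm⟩ := bwd' C N hN r hr hcond
      exact ⟨V, NS, r⁻¹, hbody, hCfr, hCnorm⟩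
  · intro r hr hcond
    exact bwd' C N hN r hr hcond
end

section
/- Let X be a real Hilbert space with unit sphere S_X, let C be a bounded subset of X, and let N : C → S_X be a mapping such that for some r > 0 one has ⟨N(y), y − x⟩ ≥ (r/2)·‖N(y) − N(x)‖² for all x, y ∈ C. Then there exists a bounded convex body V of class C^{1,1} such that C ⊆ ∂V and N(x) is outwardly normal to ∂V at x for every x ∈ C. -/
open scoped RealInnerProductSpace
open Metric Set

variable {X : Type*} [NormedAddCommGroup X] [InnerProductSpace ℝ X]

set_option maxHeartbeats 1000000 in
theorem bounded_C11_body_from_condition [CompleteSpace X]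
    (C : Set X) (hC : Bornology.IsBounded C)
    (N : X → X) (hN : ∀ x ∈ C, ‖N x‖ = 1) (r : ℝ) (hr : 0 < r)
    (h : ∀ x ∈ C, ∀ y ∈ C, ⟪N y, y - x⟫ ≥ r / 2 * ‖N y - N x‖ ^ 2) :
    ∃ (V : Set X) (NS : X → X) (L : ℝ), Bornology.IsBounded V ∧ IsC11BodyWith V NS L ∧
      C ⊆ frontier V ∧ ∀ x ∈ C, IsOutwardNormal V x (N x) := by
  classical
  set c : X → X := fun x => x - r • N x with hcdef
  set K : Set X := if C.Nonempty then closure (convexHull ℝ (c '' C)) else {0} with hKdef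
  have hKmem : ∀ x ∈ C, c x ∈ K := by
    intro x hx
    rw [hKdef, if_pos ⟨x, hx⟩]
    exact subset_closure (subset_convexHull ℝ _ ⟨x, hx, rfl⟩)
  have hKne : K.Nonempty := by
    rcases C.eq_empty_or_nonempty with hCe | hCne
    · simp [hKdef, hCe]
    · obtain ⟨x, hx⟩ := hCne
      exact ⟨c x, hKmem x hx⟩
  have hKcl : IsClosed K := by
    rw [hKdef]; split
    · exact isClosed_closure
    · exact isClosed_singleton
  have hKcx : Convex ℝ K := by
    rw [hKdef]; split
    · exact (convex_convexHull ℝ _).closure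
    · exact convex_singleton 0
  have hKbd : Bornology.IsBounded K := by
    rw [hKdef]; split
    · obtain ⟨R, hR⟩ := hC.subset_closedBall 0
      refine Bornology.IsBounded.closure ?_
      rw [isBounded_convexHull]
      refine (isBounded_closedBall (x := (0 : X)) (r := R + r)).subset ?_
      rintro _ ⟨x, hx, rfl⟩
      have h1 : ‖x‖ ≤ R := by simpa [dist_eq_norm] using hR hx
      have h2 : ‖c x‖ ≤ ‖x‖ + r := by
        calc ‖x - r • N x‖ ≤ ‖x‖ + ‖r • N x‖ := norm_sub_le _ _
          _ = ‖x‖ + r := by rw [norm_smul, hN x hx]; simp [abs_of_pos hr]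
      simp only [mem_closedBall, dist_eq_norm, sub_zero]
      linarith
    · exact Bornology.isBounded_singleton
  -- inner product of normals
  have hNN : ∀ x ∈ C, ∀ y ∈ C, ⟪N x, N y⟫ = 1 - ‖N x - N y‖ ^ 2 / 2 := by
    intro x hx y hy
    have h1 : ‖N x - N y‖ ^ 2 = ‖N x‖ ^ 2 - 2 * ⟪N x, N y⟫ + ‖N y‖ ^ 2 :=
      norm_sub_sq_real _ _
    rw [hN x hx, hN y hy] at h1
    linarith
  -- support property of K
  have hKsupp : ∀ x ∈ C, ∀ q ∈ K, ⟪N x, q - c x⟫ ≤ 0 := by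
    intro x hx q hq
    have hlin : IsLinearMap ℝ (fun q : X => ⟪N x, q⟫) :=
      ⟨fun a b => inner_add_right _ _ _, fun m a => real_inner_smul_right _ _ _⟩
    have hH : K ⊆ {q : X | ⟪N x, q⟫ ≤ ⟪N x, c x⟫} := by
      rw [hKdef, if_pos ⟨x, hx⟩]
      refine closure_minimal (convexHull_min ?_ (convex_halfSpace_le hlin _))
        (isClosed_le (continuous_const.inner continuous_id) continuous_const)
      rintro _ ⟨y, hy, rfl⟩
      have h1 : ⟪N x, x - y⟫ ≥ r / 2 * ‖N x - N y‖ ^ 2 := h y hy x hx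
      have h2 := hNN x hx y hy
      have h3 : ⟪N x, N x⟫ = 1 := by
        rw [real_inner_self_eq_norm_sq, hN x hx]; norm_num
      have hsq : 0 ≤ ‖N x - N y‖ ^ 2 := sq_nonneg _
      rw [inner_sub_right] at h1
      simp only [mem_setOf_eq, hcdef, inner_sub_right, real_inner_smul_right, h2, h3]
      nlinarith
    have := hH hq
    simp only [mem_setOf_eq] at this
    rw [inner_sub_right]
    linarith
  -- metric projection onto K
  have hproj : ∀ z : X, ∃ p, p ∈ K ∧ ‖z - p‖ = infDist z K ∧ ∀ q ∈ K, ⟪z - p, q - p⟫ ≤ 0 := by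
    intro z
    obtain ⟨p, hpK, hp⟩ :=
      exists_norm_eq_iInf_of_complete_convex hKne hKcl.isComplete hKcx z
    refine ⟨p, hpK, ?_, (norm_eq_iInf_iff_real_inner_le_zero hKcx hpK).1 hp⟩
    rw [hp, infDist_eq_iInf]
    simp_rw [dist_eq_norm]
  choose P hPK hPdist hPvar using hproj
  set V : Set X := cthickening r K with hVdef
  have hmemV : ∀ z, z ∈ V ↔ infDist z K ≤ r := by
    intro z
    rw [hVdef, mem_cthickening_iff,
      ENNReal.le_ofReal_iff_toReal_le (infEdist_ne_top hKne) hr.le]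
    exact Iff.rfl
  have hinner_ge : ∀ z : X, ∀ q ∈ K, ‖z - P z‖ ^ 2 ≤ ⟪z - P z, z - q⟫ := by
    intro z q hq
    have h1 := hPvar z q hq
    have h2 : z - q = (z - P z) - (q - P z) := by abel
    rw [h2, inner_sub_right, real_inner_self_eq_norm_sq]
    linarith
  -- frontier characterization
  have hfr : ∀ z, z ∈ frontier V ↔ infDist z K = r := by
    intro z
    constructor
    · intro hz
      have h1 : infDist z K ≤ r := (hmemV z).1 (isClosed_cthickening.frontier_subset hz)
      by_contra hne'
      have h2 : infDist z K < r := lt_of_le_of_ne h1 hne'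
      have h3 : z ∈ thickening r K := (mem_thickening_iff_infDist_lt hKne).2 h2
      have h4 : z ∈ interior V :=
        interior_maximal (thickening_subset_cthickening r K) isOpen_thickening h3
      exact hz.2 h4
    · intro hz
      have hzV : z ∈ V := (hmemV z).2 hz.le
      have hnr : ‖z - P z‖ = r := by rw [hPdist z, hz]
      refine ⟨subset_closure hzV, ?_⟩
      intro hzi
      obtain ⟨ε, hε, hball⟩ := Metric.isOpen_iff.1 isOpen_interior z hzi
      set w := z + (ε / (2 * r)) • (z - P z) with hwdef
      have hpos : 0 < ε / (2 * r) := by positivity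
      have hwz : dist w z = ε / 2 := by
        rw [hwdef, dist_eq_norm]
        simp only [add_sub_cancel_left, norm_smul, hnr, Real.norm_eq_abs,
          abs_of_pos hpos]
        field_simp
      have hwV : w ∈ V := interior_subset (hball (by rw [mem_ball, hwz]; linarith))
      have hcontra : ‖w - P w‖ ≤ r := by rw [hPdist w]; exact (hmemV w).1 hwV
      -- but w is far from every point of K
      have hfar : r * ‖w - P w‖ ≥ r ^ 2 + (ε / (2 * r)) * r ^ 2 := by
        have h1 : ⟪z - P z, w - P w⟫ = ⟪z - P z, z - P w⟫ + (ε / (2 * r)) * ‖z - P z‖ ^ 2 := by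
          have : w - P w = (z - P w) + (ε / (2 * r)) • (z - P z) := by
            rw [hwdef]; abel
          rw [this, inner_add_right, real_inner_smul_right, real_inner_self_eq_norm_sq]
        have h2 : ‖z - P z‖ ^ 2 ≤ ⟪z - P z, z - P w⟫ := hinner_ge z (P w) (hPK w)
        have h3 : ⟪z - P z, w - P w⟫ ≤ ‖z - P z‖ * ‖w - P w‖ := real_inner_le_norm _ _
        rw [hnr] at h1 h2 h3
        linarith
      nlinarith [mul_le_mul_of_nonneg_left hcontra hr.le,
        mul_pos hpos (pow_pos hr 2)]
  -- the Gauss map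
  set NS : X → X := fun z => r⁻¹ • (z - P z) with hNSdef
  have hNSnorm : ∀ z, infDist z K = r → ‖NS z‖ = 1 := by
    intro z hz
    rw [hNSdef]
    simp only [norm_smul, Real.norm_eq_abs, abs_of_pos (inv_pos.2 hr), hPdist z, hz]
    field_simp
  have hNSout : ∀ z, infDist z K = r → ∀ w ∈ V, ⟪NS z, w - z⟫ ≤ 0 := by
    intro z hz w hw
    have hnr : ‖z - P z‖ = r := by rw [hPdist z, hz]
    have hdec : w - z = (P w - P z) + (w - P w) - (z - P z) := by abel
    have h1 : ⟪z - P z, P w - P z⟫ ≤ 0 := hPvar z (P w) (hPK w)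
    have h2 : ⟪z - P z, w - P w⟫ ≤ ‖z - P z‖ * ‖w - P w‖ := real_inner_le_norm _ _
    have h3 : ‖w - P w‖ ≤ r := by rw [hPdist w]; exact (hmemV w).1 hw
    have h4 : ⟪z - P z, w - z⟫ ≤ 0 := by
      rw [hdec, inner_sub_right, inner_add_right, real_inner_self_eq_norm_sq]
      nlinarith
    rw [hNSdef]
    simp only [real_inner_smul_left]
    have : (0:ℝ) < r⁻¹ := inv_pos.2 hr
    nlinarith
  have hNSuniq : ∀ z, infDist z K = r → ∀ u, ‖u‖ = 1 →
      (∀ w ∈ V, ⟪u, w - z⟫ ≤ 0) → u = NS z := by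
    intro z hz u hu hout
    have hnr : ‖z - P z‖ = r := by rw [hPdist z, hz]
    have hwV : P z + r • u ∈ V := by
      rw [hmemV]
      calc infDist (P z + r • u) K ≤ dist (P z + r • u) (P z) := infDist_le_dist_of_mem (hPK z)
        _ = r := by
            rw [dist_eq_norm]
            simp [norm_smul, abs_of_pos hr, hu]
    have h1 := hout _ hwV
    have h2 : ⟪u, P z + r • u - z⟫ = r - ⟪u, z - P z⟫ := by
      have : P z + r • u - z = r • u - (z - P z) := by abel
      rw [this, inner_sub_right, real_inner_smul_right, real_inner_self_eq_norm_sq, hu]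
      ring
    have h3 : r ≤ ⟪u, z - P z⟫ := by rw [h2] at h1; linarith
    have h4 : ‖r • u - (z - P z)‖ ^ 2 ≤ 0 := by
      rw [norm_sub_sq_real, real_inner_smul_left, norm_smul]
      simp only [Real.norm_eq_abs, abs_of_pos hr, hu, hnr]
      nlinarith
    have h5 : r • u = z - P z := by
      have := sq_nonneg ‖r • u - (z - P z)‖
      have h6 : ‖r • u - (z - P z)‖ = 0 := by nlinarith
      rw [norm_eq_zero, sub_eq_zero] at h6
      exact h6
    rw [hNSdef]
    simp only [← h5, smul_smul, inv_mul_cancel₀ hr.ne', one_smul]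
  -- Lipschitz property of the projection
  have hPlip : ∀ z w : X, ‖P z - P w‖ ≤ ‖z - w‖ := by
    intro z w
    have h1 : ⟪z - P z, P w - P z⟫ ≤ 0 := hPvar z (P w) (hPK w)
    have h2 : ⟪w - P w, P z - P w⟫ ≤ 0 := hPvar w (P z) (hPK z)
    have ha : 0 ≤ ⟪z - P z, P z - P w⟫ := by
      have : P z - P w = -(P w - P z) := by abel
      rw [this, inner_neg_right]; linarith
    have hkey : ‖P z - P w‖ ^ 2 ≤ ⟪z - w, P z - P w⟫ := by
      have hzw : z - w = (z - P z) - (w - P w) + (P z - P w) := by abel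
      rw [hzw, inner_add_left, inner_sub_left, real_inner_self_eq_norm_sq]
      linarith
    have hcs : ⟪z - w, P z - P w⟫ ≤ ‖z - w‖ * ‖P z - P w‖ := real_inner_le_norm _ _
    nlinarith [norm_nonneg (P z - P w), norm_nonneg (z - w)]
  have hNSlip : ∀ z w : X, ‖NS z - NS w‖ ≤ 2 / r * ‖z - w‖ := by
    intro z w
    have h1 : NS z - NS w = r⁻¹ • ((z - P z) - (w - P w)) := by
      rw [hNSdef]; simp [smul_sub]
    have h2 : (z - P z) - (w - P w) = (z - w) - (P z - P w) := by abel
    rw [h1, h2, norm_smul, Real.norm_eq_abs, abs_of_pos (inv_pos.2 hr)]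
    have h3 : ‖(z - w) - (P z - P w)‖ ≤ ‖z - w‖ + ‖P z - P w‖ := norm_sub_le _ _
    have h4 := hPlip z w
    have h5 : (0:ℝ) < r⁻¹ := inv_pos.2 hr
    rw [div_eq_mul_inv]
    nlinarith
  -- C lies on the frontier
  have hCd : ∀ x ∈ C, infDist x K = r := by
    intro x hx
    have hle : infDist x K ≤ r := by
      calc infDist x K ≤ dist x (c x) := infDist_le_dist_of_mem (hKmem x hx)
        _ = r := by
            rw [dist_eq_norm, hcdef]
            simp only [sub_sub_cancel, norm_smul, hN x hx, Real.norm_eq_abs,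
              abs_of_pos hr, mul_one]
    have hge : r ≤ infDist x K := by
      rw [← hPdist x]
      have h1 : ⟪N x, P x - c x⟫ ≤ 0 := hKsupp x hx (P x) (hPK x)
      have h2 : ⟪N x, x - c x⟫ = r := by
        rw [hcdef]
        simp only [sub_sub_cancel, real_inner_smul_right]
        rw [real_inner_self_eq_norm_sq, hN x hx]
        ring
      have h3 : ⟪N x, x - P x⟫ ≤ ‖N x‖ * ‖x - P x‖ := real_inner_le_norm _ _
      rw [hN x hx, one_mul] at h3
      have h4 : ⟪N x, x - P x⟫ = ⟪N x, x - c x⟫ - ⟪N x, P x - c x⟫ := by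
        rw [← inner_sub_right]
        congr 1
        abel
      rw [h4, h2] at h3
      linarith
    linarith
  have hCfr : C ⊆ frontier V := fun x hx => (hfr x).2 (hCd x hx)
  -- C has outward normal N
  have hCout : ∀ x ∈ C, IsOutwardNormal V x (N x) := by
    intro x hx
    refine ⟨hN x hx, fun z hz => ?_⟩
    have h1 : ⟪N x, P z - c x⟫ ≤ 0 := hKsupp x hx (P z) (hPK z)
    have h2 : ⟪N x, z - P z⟫ ≤ ‖z - P z‖ := by
      have := real_inner_le_norm (N x) (z - P z)
      rwa [hN x hx, one_mul] at this
    have h3 : ‖z - P z‖ ≤ r := by rw [hPdist z]; exact (hmemV z).1 hz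
    have h4 : ⟪N x, c x - x⟫ = -r := by
      rw [hcdef]
      have : x - r • N x - x = -(r • N x) := by abel
      simp only [this, inner_neg_right, real_inner_smul_right]
      rw [real_inner_self_eq_norm_sq, hN x hx]
      ring
    have h5 : z - x = (P z - c x) + (z - P z) + (c x - x) := by abel
    rw [h5, inner_add_right, inner_add_right, h4]
    linarith
  -- assemble
  refine ⟨V, NS, 2 / r, hKbd.cthickening, ⟨⟨isClosed_cthickening, hKcx.cthickening r, ?_⟩,
    ?_, ?_⟩, hCfr, hCout⟩
  · obtain ⟨k, hk⟩ := hKne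
    exact ⟨k, interior_maximal (thickening_subset_cthickening r K) isOpen_thickening
      (self_subset_thickening hr K hk)⟩
  · intro z hz
    have hzd := (hfr z).1 hz
    exact ⟨⟨hNSnorm z hzd, hNSout z hzd⟩, fun u hu => hNSuniq z hzd u hu.1 hu.2⟩
  · intro z _ w _
    exact hNSlip z w
end

section
/- Let X be a real Hilbert space, let V be a convex body in X of class C¹ with boundary S = ∂V and outer unit normal map N_S : S → S_X, and suppose N_S is L-Lipschitz for some L > 0; for x with b_V(x) > −1/L let P_S(x) denote the unique point of S nearest to x. Then for every ε ∈ (0,1), and for all x, y in U_ε := {z ∈ X : b_V(z) ≥ −(1−ε)/L}, one has ⟨P_S(x) − P_S(y), x − y⟩ ≥ ε·‖P_S(x) − P_S(y)‖². In particular, P_S is (1/ε)-Lipschitz on U_ε. -/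
open scoped RealInnerProductSpace
open Metric Set

variable {X : Type*} [NormedAddCommGroup X] [InnerProductSpace ℝ X]

/-- The signed distance to `∂V`: negative inside `V`, nonnegative outside. -/
noncomputable def signedDistBdry (V : Set X) (x : X) : ℝ :=
  letI := Classical.propDecidable (x ∈ interior V)
  if x ∈ interior V then -Metric.infDist x (frontier V) else Metric.infDist x (frontier V)


/-! The foot point `p` of `x` on `∂V` satisfies `x - p = b_V(x) • N(p)`: outside `V`, `p` is the
nearest point of `V`, so `x - p` is an outward normal direction; inside, the closed ball of
radius `dist(x, ∂V)` stays in `V`, which forces `x - p` to point along `-N(p)`. Writing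
`x - y = (p - q) + b_V(x) N(p) - b_V(y) N(q)`, the normal-cone inequalities at `p` and `q` make
the two normal terms contribute at least `-c ⟪N(p) - N(q), p - q⟫ ≥ -c L ‖p - q‖²` when
`b_V ≥ -c`. -/

theorem IsPreconnected.subset_interior_of_disjoint_frontier {α : Type*} [TopologicalSpace α]
    {s c : Set α} (hc : IsPreconnected c) (hcs : (c ∩ s).Nonempty)
    (hfr : Disjoint c (frontier s)) : c ⊆ interior s := by
  have mem_interior : ∀ z ∈ c, z ∈ closure s → z ∈ interior s := fun z hz hzs =>
    by_contra fun hzi => hfr.notMem_of_mem_left hz ⟨hzs, hzi⟩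
  obtain ⟨x, hxc, hxs⟩ := hcs
  refine hc.subset_left_of_subset_union isOpen_interior isClosed_closure.isOpen_compl
    (disjoint_compl_right.mono_left interior_subset_closure) (fun z hz => ?_)
    ⟨x, hxc, mem_interior x hxc (subset_closure hxs)⟩
  by_cases hzs : z ∈ closure s
  · exact Or.inl (mem_interior z hz hzs)
  · exact Or.inr hzs

section NormedAddCommGroup

variable {E : Type*} [NormedAddCommGroup E] {s : Set E} {x z : E}

theorem signedDistBdry_of_mem (hx : x ∈ s) : signedDistBdry s x = -infDist x (frontier s) := by
  by_cases hxi : x ∈ interior s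
  · simp [signedDistBdry, hxi]
  · simp [signedDistBdry, hxi, infDist_zero_of_mem (show x ∈ frontier s from
      ⟨subset_closure hx, hxi⟩)]

theorem signedDistBdry_of_notMem (hx : x ∉ s) : signedDistBdry s x = infDist x (frontier s) := by
  have hxi : x ∉ interior s := fun h => hx (interior_subset h)
  simp [signedDistBdry, hxi]

variable [NormedSpace ℝ E]

theorem ball_infDist_frontier_subset_interior (hx : x ∈ s) :
    ball x (infDist x (frontier s)) ⊆ interior s := by
  rcases (infDist_nonneg (x := x) (s := frontier s)).eq_or_lt with hd | hd
  · rw [← hd, ball_zero]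
    exact empty_subset _
  · exact (convex_ball x _).isPreconnected.subset_interior_of_disjoint_frontier
      ⟨x, mem_ball_self hd, hx⟩ (subset_compl_iff_disjoint_right.1 ball_infDist_subset_compl)

theorem closedBall_infDist_frontier_subset (hs : IsClosed s) (hx : x ∈ s) :
    closedBall x (infDist x (frontier s)) ⊆ s := by
  rcases (infDist_nonneg (x := x) (s := frontier s)).eq_or_lt with hd | hd
  · rw [← hd, closedBall_zero]
    exact singleton_subset_iff.2 hx
  · rw [← closure_ball x hd.ne']
    exact hs.closure_subset_iff.2 ((ball_infDist_frontier_subset_interior hx).trans interior_subset)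

theorem infDist_frontier_le_dist_of_notMem (hx : x ∉ s) (hz : z ∈ s) :
    infDist x (frontier s) ≤ dist x z := by
  have hball := ball_infDist_frontier_subset_interior (s := sᶜ) hx
  rw [frontier_compl] at hball
  by_contra! hlt
  exact interior_subset (hball (mem_ball'.2 hlt)) hz

end NormedAddCommGroup

section InnerProductSpace

variable {V : Set X} {x p u : X}

theorem isOutwardNormal_of_notMem (hV : Convex ℝ V) (hx : x ∉ V) (hp : p ∈ V)
    (hd : ‖x - p‖ = infDist x (frontier V)) :
    IsOutwardNormal V p (‖x - p‖⁻¹ • (x - p)) := by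
  have : Nonempty V := ⟨⟨p, hp⟩⟩
  have hmin : ‖x - p‖ = ⨅ w : V, ‖x - w‖ := le_antisymm
      (le_ciInf fun w => hd ▸ dist_eq_norm x w ▸ infDist_frontier_le_dist_of_notMem hx w.2)
      (ciInf_le (f := fun w : V => ‖x - w‖) ⟨0, forall_mem_range.2 fun _ => norm_nonneg _⟩ ⟨p, hp⟩)
  have hxp : x - p ≠ 0 := sub_ne_zero.2 (ne_of_mem_of_not_mem hp hx).symm
  refine ⟨norm_smul_inv_norm hxp, fun z hz => ?_⟩
  rw [real_inner_smul_left]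
  exact mul_nonpos_of_nonneg_of_nonpos (by positivity)
    ((norm_eq_iInf_iff_real_inner_le_zero hV hp).1 hmin z hz)

theorem sub_eq_neg_infDist_smul_of_mem (hV : IsClosed V) (hx : x ∈ V) (hu : IsOutwardNormal V p u)
    (hd : ‖x - p‖ = infDist x (frontier V)) : x - p = -infDist x (frontier V) • u := by
  set d := infDist x (frontier V)
  have hd0 : 0 ≤ d := infDist_nonneg
  have hxu : x + d • u ∈ V := closedBall_infDist_frontier_subset hV hx <| by
    rw [mem_closedBall, dist_eq_norm, add_sub_cancel_left, norm_smul, hu.1, Real.norm_eq_abs,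
      abs_of_nonneg hd0, mul_one]
  have hinner : ⟪u, x - p⟫ ≤ -d := by
    have h := hu.2 _ hxu
    rw [show x + d • u - p = (x - p) + d • u by abel, inner_add_right, real_inner_smul_right,
      real_inner_self_eq_norm_sq, hu.1] at h
    linarith
  -- `‖(x - p) + d u‖² = 2d² + 2d ⟪u, x - p⟫ ≤ 0`: equality in Cauchy–Schwarz.
  have hsq : ‖(x - p) + d • u‖ ^ 2 = 0 := by
    have h := norm_add_sq_real (x - p) (d • u)
    rw [real_inner_smul_right, real_inner_comm, norm_smul, hu.1, Real.norm_eq_abs,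
      abs_of_nonneg hd0, hd] at h
    nlinarith [sq_nonneg ‖(x - p) + d • u‖]
  rw [neg_smul]
  exact eq_neg_of_add_eq_zero_left (norm_eq_zero.1 (pow_eq_zero_iff two_ne_zero |>.1 hsq))

theorem sub_eq_signedDistBdry_smul (hVc : IsClosed V) (hV : Convex ℝ V) (hp : p ∈ V)
    (hu : IsOutwardNormal V p u) (huniq : ∀ w, IsOutwardNormal V p w → w = u)
    (hd : ‖x - p‖ = infDist x (frontier V)) : x - p = signedDistBdry V x • u := by
  by_cases hx : x ∈ V
  · rw [signedDistBdry_of_mem hx]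
    exact sub_eq_neg_infDist_smul_of_mem hVc hx hu hd
  · have hxp : ‖x - p‖ ≠ 0 := norm_ne_zero_iff.2 (sub_ne_zero.2 (ne_of_mem_of_not_mem hp hx).symm)
    rw [signedDistBdry_of_notMem hx, ← hd, ← huniq _ (isOutwardNormal_of_notMem hV hx hp hd),
      smul_smul, mul_inv_cancel₀ hxp, one_smul]

theorem mul_norm_sq_le_inner_sub_of_sub_eq_smul {p q u v x y : X} {s t c L : ℝ}
    (hu : ⟪u, q - p⟫ ≤ 0) (hv : ⟪v, p - q⟫ ≤ 0) (huv : ‖u - v‖ ≤ L * ‖p - q‖)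
    (hx : x - p = s • u) (hy : y - q = t • v) (hc : 0 ≤ c) (hs : -c ≤ s) (ht : -c ≤ t) :
    (1 - c * L) * ‖p - q‖ ^ 2 ≤ ⟪p - q, x - y⟫ := by
  have hu' : 0 ≤ ⟪p - q, u⟫ := by rw [real_inner_comm, ← neg_sub, inner_neg_right]; linarith
  have hv' : ⟪p - q, v⟫ ≤ 0 := by rwa [real_inner_comm]
  have hexpand : ⟪p - q, x - y⟫ = ‖p - q‖ ^ 2 + s * ⟪p - q, u⟫ - t * ⟪p - q, v⟫ := by
    rw [show x - y = (p - q) + s • u - t • v by rw [← hx, ← hy]; abel, inner_sub_right,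
      inner_add_right, real_inner_smul_right, real_inner_smul_right, real_inner_self_eq_norm_sq]
  have hnormals : ⟪p - q, u⟫ - ⟪p - q, v⟫ ≤ L * ‖p - q‖ ^ 2 := calc
    ⟪p - q, u⟫ - ⟪p - q, v⟫ = ⟪p - q, u - v⟫ := (inner_sub_right _ _ _).symm
    _ ≤ ‖p - q‖ * ‖u - v‖ := real_inner_le_norm _ _
    _ ≤ ‖p - q‖ * (L * ‖p - q‖) := by gcongr
    _ = L * ‖p - q‖ ^ 2 := by ring
  nlinarith [mul_le_mul_of_nonneg_right hs hu', mul_le_mul_of_nonpos_right ht hv',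
    mul_le_mul_of_nonneg_left hnormals hc]

theorem norm_le_one_div_mul_norm_of_mul_norm_sq_le_inner {a b : X} {ε : ℝ} (hε : 0 < ε)
    (h : ε * ‖a‖ ^ 2 ≤ ⟪a, b⟫) : ‖a‖ ≤ (1 / ε) * ‖b‖ := by
  rw [one_div, ← div_eq_inv_mul, le_div_iff₀' hε]
  rcases (norm_nonneg a).eq_or_lt with ha | ha
  · rw [← ha, mul_zero]
    exact norm_nonneg b
  · nlinarith [real_inner_le_norm a b]

end InnerProductSpace

theorem metric_projection_firmly_nonexpansive_general
    (V : Set X) (hV : IsConvexBody V) (NS : X → X) (L : ℝ) (hL : 0 < L)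
    (hNS : ∀ x ∈ frontier V, IsOutwardNormal V x (NS x) ∧
      ∀ u, IsOutwardNormal V x u → u = NS x)
    (hLip : ∀ x ∈ frontier V, ∀ y ∈ frontier V, ‖NS x - NS y‖ ≤ L * ‖x - y‖)
    (ε : ℝ) (hε : ε ∈ Set.Ioo (0:ℝ) 1)
    (x y : X) (hx : signedDistBdry V x ≥ -((1 - ε) / L)) (hy : signedDistBdry V y ≥ -((1 - ε) / L))
    (px py : X)
    (hpx : px ∈ frontier V ∧ ‖x - px‖ = Metric.infDist x (frontier V))
    (hpy : py ∈ frontier V ∧ ‖y - py‖ = Metric.infDist y (frontier V)) :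
    ⟪px - py, x - y⟫ ≥ ε * ‖px - py‖ ^ 2 ∧ ‖px - py‖ ≤ (1 / ε) * ‖x - y‖ := by
  obtain ⟨hVc, hVconv, -⟩ := hV
  have hfr : frontier V ⊆ V := hVc.frontier_subset
  have hdecomp : ∀ z pz, pz ∈ frontier V → ‖z - pz‖ = infDist z (frontier V) →
      z - pz = signedDistBdry V z • NS pz := fun z pz hpz hd =>
    sub_eq_signedDistBdry_smul hVc hVconv (hfr hpz) (hNS pz hpz).1 (hNS pz hpz).2 hd
  have hfirm := mul_norm_sq_le_inner_sub_of_sub_eq_smul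
    ((hNS px hpx.1).1.2 py (hfr hpy.1)) ((hNS py hpy.1).1.2 px (hfr hpx.1))
    (hLip px hpx.1 py hpy.1) (hdecomp x px hpx.1 hpx.2) (hdecomp y py hpy.1 hpy.2)
    (div_nonneg (sub_nonneg.2 hε.2.le) hL.le) hx hy
  rw [div_mul_cancel₀ _ hL.ne', sub_sub_cancel] at hfirm
  exact ⟨hfirm, norm_le_one_div_mul_norm_of_mul_norm_sq_le_inner hε.1 hfirm⟩

theorem metric_projection_firmly_nonexpansive [CompleteSpace X]
    (V : Set X) (hV : IsConvexBody V) (NS : X → X) (L : ℝ) (hL : 0 < L)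
    (hNS : ∀ x ∈ frontier V, IsOutwardNormal V x (NS x) ∧
      ∀ u, IsOutwardNormal V x u → u = NS x)
    (hLip : ∀ x ∈ frontier V, ∀ y ∈ frontier V, ‖NS x - NS y‖ ≤ L * ‖x - y‖)
    (ε : ℝ) (hε : ε ∈ Set.Ioo (0:ℝ) 1)
    (x y : X) (hx : signedDistBdry V x ≥ -((1 - ε) / L)) (hy : signedDistBdry V y ≥ -((1 - ε) / L))
    (px py : X)
    (hpx : px ∈ frontier V ∧ ‖x - px‖ = Metric.infDist x (frontier V))
    (hpy : py ∈ frontier V ∧ ‖y - py‖ = Metric.infDist y (frontier V)) :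
    ⟪px - py, x - y⟫ ≥ ε * ‖px - py‖ ^ 2 ∧ ‖px - py‖ ≤ (1 / ε) * ‖x - y‖ :=
  metric_projection_firmly_nonexpansive_general V hV NS L hL hNS hLip ε hε x y hx hy px py hpx hpy
end

section
/- Let X be a real Hilbert space and let V be a convex body in X of class C¹ with boundary S = ∂V and outer unit normal map N_S : S → S_X. If N_S is L-Lipschitz (L > 0), then for every r with 0 < r < 1/L the balls of radius r roll freely inside V on S: for every x ∈ S there exists z ∈ X such that the closed ball B(z, r) is contained in V and ∂B(z, r) ∩ S = {x}. -/
open scoped RealInnerProductSpace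
open Metric Set

variable {X : Type*} [NormedAddCommGroup X] [InnerProductSpace ℝ X]

/-- If `z` lies in the interior of a closed set `V` and every frontier point of `V`
is at distance at least `ρ > 0` from `z`, then the closed ball of radius `ρ`
around `z` is contained in `V`. -/
lemma closedBall_subset_of_frontier_far {V : Set X} (hVc : IsClosed V)
    {z : X} (hz : z ∈ interior V) {ρ : ℝ} (hρ : 0 < ρ)
    (hdist : ∀ p ∈ frontier V, ρ ≤ dist z p) :
    Metric.closedBall z ρ ⊆ V := by
  have hsub : ball z ρ ⊆ interior V ∪ (closure V)ᶜ := by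
    intro w hw
    have hwF : w ∉ frontier V := by
      intro hwF
      have h1 := hdist w hwF
      rw [mem_ball, dist_comm] at hw
      linarith
    by_cases h : w ∈ closure V
    · left
      by_contra h2
      exact hwF ⟨h, h2⟩
    · right; exact h
  have hball : ball z ρ ⊆ interior V := by
    refine (convex_ball z ρ).isPreconnected.subset_left_of_subset_union
      isOpen_interior isClosed_closure.isOpen_compl ?_ hsub ⟨z, mem_ball_self hρ, hz⟩
    exact Set.disjoint_compl_right_iff_subset.mpr interior_subset_closure
  calc Metric.closedBall z ρ = closure (ball z ρ) := (closure_ball z hρ.ne').symm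
    _ ⊆ closure (interior V) := closure_mono hball
    _ ⊆ closure V := closure_mono interior_subset
    _ = V := hVc.closure_eq

set_option maxHeartbeats 1000000 in
theorem balls_roll_freely [CompleteSpace X]
    (V : Set X) (hV : IsConvexBody V) (NS : X → X) (L : ℝ) (hL : 0 < L)
    (hNS : ∀ x ∈ frontier V, IsOutwardNormal V x (NS x) ∧
      ∀ u, IsOutwardNormal V x u → u = NS x)
    (hLip : ∀ x ∈ frontier V, ∀ y ∈ frontier V, ‖NS x - NS y‖ ≤ L * ‖x - y‖) :
    ∀ r : ℝ, 0 < r → r < 1 / L → ∀ x ∈ frontier V, ∃ z : X,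
      Metric.closedBall z r ⊆ V ∧ Metric.sphere z r ∩ frontier V = {x} := by
  obtain ⟨hVc, hVconv, hVint⟩ := hV
  intro r hr hrL x hx
  have hLr : L * r < 1 := by
    rw [lt_div_iff₀ hL] at hrL; linarith
  have hLr2 : (L * r) * (L * r) < 1 := by nlinarith [mul_pos hL hr]
  have hxV : x ∈ V := hVc.frontier_subset hx
  obtain ⟨⟨hn1, hnsupp⟩, -⟩ := hNS x hx
  set n := NS x with hn
  clear_value n
  set z := x - r • n with hz
  clear_value z
  have hxz : x - z = r • n := by rw [hz]; exact sub_sub_cancel x (r • n)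
  have hxznorm : ‖x - z‖ = r := by
    rw [hxz, norm_smul, hn1, Real.norm_eq_abs, abs_of_pos hr, mul_one]
  -- Step 1 : z ∈ V
  have hzV : z ∈ V := by
    by_contra hzV
    obtain ⟨w, hwV, hwmin⟩ :=
      exists_norm_eq_iInf_of_complete_convex ⟨x, hxV⟩ hVc.isComplete hVconv z
    have hproj : ∀ y ∈ V, ⟪z - w, y - w⟫ ≤ 0 :=
      (norm_eq_iInf_iff_real_inner_le_zero hVconv hwV).mp hwmin
    set d := ‖z - w‖ with hd
    clear_value d
    have hd0 : 0 < d := by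
      rw [hd, norm_pos_iff, sub_ne_zero]
      rintro rfl; exact hzV hwV
    have hwF : w ∈ frontier V := by
      rw [hVc.frontier_eq]
      refine ⟨hwV, fun hwint => ?_⟩
      obtain ⟨ε, hε, hball⟩ := Metric.isOpen_iff.mp isOpen_interior w hwint
      set θ := min 1 (ε / (2 * d)) with hθ
      have hθ0 : 0 < θ := lt_min one_pos (by positivity)
      have hy : w + θ • (z - w) ∈ V := by
        refine interior_subset (hball ?_)
        rw [mem_ball, dist_eq_norm, add_sub_cancel_left, norm_smul, Real.norm_eq_abs,
          abs_of_pos hθ0]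
        have h1 : θ ≤ ε / (2 * d) := min_le_right _ _
        have : θ * d ≤ (ε / (2 * d)) * d := by nlinarith
        have h2 : (ε / (2 * d)) * d = ε / 2 := by field_simp
        rw [← hd]; nlinarith
      have h3 := hproj _ hy
      rw [add_sub_cancel_left, real_inner_smul_right, real_inner_self_eq_norm_mul_norm,
        ← hd] at h3
      nlinarith [mul_pos hθ0 (mul_pos hd0 hd0)]
    set u := d⁻¹ • (z - w) with hu
    clear_value u
    have hu1 : ‖u‖ = 1 := by
      rw [hu, norm_smul, Real.norm_eq_abs, abs_of_pos (inv_pos.mpr hd0), ← hd,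
        inv_mul_cancel₀ hd0.ne']
    have husupp : ∀ y ∈ V, ⟪u, y - w⟫ ≤ 0 := by
      intro y hy
      rw [hu, real_inner_smul_left]
      exact mul_nonpos_of_nonneg_of_nonpos (inv_pos.mpr hd0).le (hproj y hy)
    have huNS : u = NS w := (hNS w hwF).2 u ⟨hu1, husupp⟩
    have hzw : z - w = d • u := by
      rw [hu, smul_smul, mul_inv_cancel₀ hd0.ne', one_smul]
    -- inner products
    have hxw : x - w = r • n + (z - w) := by rw [hz]; abel
    have hin : ⟪u, x - w⟫ ≤ 0 := husupp x hxV
    have hin2 : ⟪u, x - w⟫ = r * ⟪u, n⟫ + d := by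
      rw [hxw, inner_add_right, real_inner_smul_right, hzw, real_inner_smul_right,
        real_inner_self_eq_norm_mul_norm, hu1]
      ring
    rw [hin2] at hin
    rw [real_inner_comm n u] at hin
    have hun : r * ⟪n, u⟫ ≤ -d := by linarith
    have hxwsq : ‖x - w‖ ^ 2 = r ^ 2 + 2 * (r * (d * ⟪n, u⟫)) + d ^ 2 := by
      rw [hxw, norm_add_sq_real, hzw, real_inner_smul_left, real_inner_smul_right,
        norm_smul, norm_smul, Real.norm_eq_abs, Real.norm_eq_abs, abs_of_pos hr,
        abs_of_pos hd0, hn1, hu1]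
      ring
    have hlip := hLip x hx w hwF
    rw [← hn, ← huNS] at hlip
    have hlipsq : ‖n - u‖ ^ 2 ≤ (L * ‖x - w‖) ^ 2 :=
      pow_le_pow_left₀ (norm_nonneg _) hlip 2
    have hnu : ‖n - u‖ ^ 2 = 2 - 2 * ⟪n, u⟫ := by
      rw [norm_sub_sq_real, hn1, hu1]; ring
    -- contradiction
    have hc0 : ⟪n, u⟫ ≤ 0 := by
      by_contra hpos
      push_neg at hpos
      nlinarith [mul_pos hr hpos]
    have h4 : 2 - 2 * ⟪n, u⟫ ≤ L ^ 2 * (r ^ 2 + 2 * (r * (d * ⟪n, u⟫)) + d ^ 2) := by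
      calc 2 - 2 * ⟪n, u⟫ = ‖n - u‖ ^ 2 := hnu.symm
        _ ≤ (L * ‖x - w‖) ^ 2 := hlipsq
        _ = L ^ 2 * ‖x - w‖ ^ 2 := by ring
        _ = L ^ 2 * (r ^ 2 + 2 * (r * (d * ⟪n, u⟫)) + d ^ 2) := by rw [hxwsq]
    have h5 : 2 * (r * (d * ⟪n, u⟫)) ≤ -2 * d ^ 2 := by
      nlinarith [mul_le_mul_of_nonneg_left hun (by linarith : (0:ℝ) ≤ 2 * d)]
    have h6 : L ^ 2 * (r ^ 2 + 2 * (r * (d * ⟪n, u⟫)) + d ^ 2) ≤ L ^ 2 * (r ^ 2 - d ^ 2) := by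
      nlinarith [mul_le_mul_of_nonneg_left h5 (sq_nonneg L)]
    nlinarith [sq_nonneg (L * d)]
  -- Step 2 : z ∉ frontier V
  have hzF : z ∉ frontier V := by
    intro hzF
    obtain ⟨⟨hnz1, hnzsupp⟩, -⟩ := hNS z hzF
    have h1 : ⟪NS z, x - z⟫ ≤ 0 := hnzsupp x hxV
    rw [hxz, real_inner_smul_right] at h1
    have h2 : ⟪NS z, n⟫ ≤ 0 := by nlinarith
    have hlip := hLip x hx z hzF
    rw [← hn, hxznorm] at hlip
    have h3 : ‖n - NS z‖ ^ 2 ≤ (L * r) ^ 2 := pow_le_pow_left₀ (norm_nonneg _) hlip 2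
    have h4 : ‖n - NS z‖ ^ 2 = 2 - 2 * ⟪n, NS z⟫ := by
      rw [norm_sub_sq_real, hn1, hnz1]; ring
    have h5 : ⟪n, NS z⟫ = ⟪NS z, n⟫ := real_inner_comm _ _
    nlinarith
  have hzint : z ∈ interior V := by
    by_contra h
    apply hzF
    rw [hVc.frontier_eq]
    exact ⟨hzV, h⟩
  have hFne : (frontier V).Nonempty := ⟨x, hx⟩
  set ρ := Metric.infDist z (frontier V) with hρdef
  clear_value ρ
  have hρpos : 0 < ρ := by
    rw [hρdef]; exact (isClosed_frontier.notMem_iff_infDist_pos hFne).mp hzF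
  have hballρ : Metric.closedBall z ρ ⊆ V :=
    closedBall_subset_of_frontier_far hVc hzint hρpos
      (fun p hp => by rw [hρdef]; exact Metric.infDist_le_dist_of_mem hp)
  -- Step 3 : r ≤ ρ
  have hρr : r ≤ ρ := by
    by_contra hcon
    push_neg at hcon
    have hsqrtcont : Continuous (fun m : ℝ => Real.sqrt (m ^ 2 - ρ ^ 2)) :=
      Real.continuous_sqrt.comp (by continuity)
    have hψcont : Continuous (fun m : ℝ => L ^ 2 * r * (r ^ 2 + m ^ 2) +
        2 * r ^ 2 * L ^ 2 * Real.sqrt (m ^ 2 - ρ ^ 2) + 2 * m * (1 - L ^ 2 * r * ρ) - 2 * r) := by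
      refine Continuous.sub (Continuous.add (Continuous.add ?_ ?_) ?_) continuous_const
      · continuity
      · exact continuous_const.mul hsqrtcont
      · continuity
    have hclosed : IsClosed {m : ℝ | 0 ≤ L ^ 2 * r * (r ^ 2 + m ^ 2) +
        2 * r ^ 2 * L ^ 2 * Real.sqrt (m ^ 2 - ρ ^ 2) + 2 * m * (1 - L ^ 2 * r * ρ) - 2 * r} :=
      isClosed_le continuous_const hψcont
    have hmem : ρ ∈ closure {m : ℝ | 0 ≤ L ^ 2 * r * (r ^ 2 + m ^ 2) +
        2 * r ^ 2 * L ^ 2 * Real.sqrt (m ^ 2 - ρ ^ 2) + 2 * m * (1 - L ^ 2 * r * ρ) - 2 * r} := by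
      rw [Metric.mem_closure_iff]
      intro ε hε
      obtain ⟨q, hqF, hqd⟩ := (Metric.infDist_lt_iff hFne).mp
        (show Metric.infDist z (frontier V) < ρ + ε by rw [← hρdef]; linarith)
      set m := ‖q - z‖ with hm
      clear_value m
      have hmd : dist z q = m := by rw [dist_eq_norm, norm_sub_rev, hm]
      have hm1 : ρ ≤ m := by
        rw [hρdef, ← hmd]; exact Metric.infDist_le_dist_of_mem hqF
      have hm2 : m < ρ + ε := hmd ▸ hqd
      refine ⟨m, ?_, ?_⟩
      swap
      · rw [Real.dist_eq, abs_of_nonpos (by linarith)]; linarith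
      -- now the main estimate
      simp only [Set.mem_setOf_eq]
      obtain ⟨⟨hu1, husupp⟩, -⟩ := hNS q hqF
      set u := NS q with hudef
      clear_value u
      set e := q - z with he
      clear_value e
      have hm0 : 0 ≤ m := by rw [hm]; exact norm_nonneg _
      -- f1 : ρ ≤ ⟪u, e⟫
      have hyb : z + ρ • u ∈ V := by
        apply hballρ
        rw [mem_closedBall, dist_eq_norm, add_sub_cancel_left, norm_smul,
          Real.norm_eq_abs, abs_of_pos hρpos, hu1, mul_one]
      have f1 := husupp _ hyb
      have f1' : ρ ≤ ⟪u, e⟫ := by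
        have heq : z + ρ • u - q = ρ • u - e := by rw [he]; abel
        rw [heq, inner_sub_right, real_inner_smul_right,
          real_inner_self_eq_norm_mul_norm, hu1] at f1
        linarith
      -- f2 : r * ⟪n, u⟫ ≤ ⟪u, e⟫
      have hxq : x - q = r • n - e := by rw [he, hz]; abel
      have f2 := husupp x hxV
      have f2' : r * ⟪n, u⟫ ≤ ⟪u, e⟫ := by
        rw [hxq, inner_sub_right, real_inner_smul_right, real_inner_comm n u] at f2
        linarith
      -- f3 : ⟪u, e⟫ ≤ m
      have f3 : ⟪u, e⟫ ≤ m := by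
        have h := real_inner_le_norm u e
        rw [hu1, one_mul] at h
        rw [hm]
        exact h
      -- s = sqrt (m² - ρ²)
      set s := Real.sqrt (m ^ 2 - ρ ^ 2) with hs
      clear_value s
      have hs0 : 0 ≤ s := by rw [hs]; exact Real.sqrt_nonneg _
      have hs2 : s ^ 2 = m ^ 2 - ρ ^ 2 := by
        rw [hs]; exact Real.sq_sqrt (by nlinarith [mul_le_mul hm1 hm1 hρpos.le hm0])
      -- f5 : ‖e - ρ • u‖ ≤ s
      have f4 : ‖e - ρ • u‖ ^ 2 = m ^ 2 - 2 * (ρ * ⟪u, e⟫) + ρ ^ 2 := by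
        rw [norm_sub_sq_real, real_inner_smul_right, norm_smul, Real.norm_eq_abs,
          abs_of_pos hρpos, hu1, real_inner_comm u e, ← hm]
        ring
      have f5 : ‖e - ρ • u‖ ≤ s := by
        rw [hs]
        apply Real.le_sqrt_of_sq_le
        rw [f4]
        linarith [mul_le_mul_of_nonneg_left f1' (by positivity : (0:ℝ) ≤ 2 * ρ)]
      -- f7 : ρ * ⟪n, u⟫ - s ≤ ⟪n, e⟫
      have f6 : |⟪n, e - ρ • u⟫| ≤ ‖e - ρ • u‖ := by
        have := abs_real_inner_le_norm n (e - ρ • u)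
        rwa [hn1, one_mul] at this
      have f7 : ρ * ⟪n, u⟫ - s ≤ ⟪n, e⟫ := by
        have h1 : ⟪n, e - ρ • u⟫ = ⟪n, e⟫ - ρ * ⟪n, u⟫ := by
          rw [inner_sub_right, real_inner_smul_right]
        have h2 : -(‖e - ρ • u‖) ≤ ⟪n, e - ρ • u⟫ := neg_le_of_abs_le f6
        linarith [f5]
      -- f8 : ‖x - q‖² = r² - 2 r ⟪n,e⟫ + m²
      have f8 : ‖x - q‖ ^ 2 = r ^ 2 - 2 * (r * ⟪n, e⟫) + m ^ 2 := by
        rw [hxq, norm_sub_sq_real, real_inner_smul_left, norm_smul, Real.norm_eq_abs,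
          abs_of_pos hr, hn1, ← hm]
        ring
      -- Lipschitz
      have hlip := hLip x hx q hqF
      rw [← hn, ← hudef] at hlip
      have f11 : ‖n - u‖ ^ 2 ≤ L ^ 2 * ‖x - q‖ ^ 2 := by
        have h12 := pow_le_pow_left₀ (norm_nonneg _) hlip 2
        calc ‖n - u‖ ^ 2 ≤ (L * ‖x - q‖) ^ 2 := h12
          _ = L ^ 2 * ‖x - q‖ ^ 2 := by ring
      have f9 : ‖n - u‖ ^ 2 = 2 - 2 * ⟪n, u⟫ := by
        rw [norm_sub_sq_real, hn1, hu1]; ring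
      -- combined estimate
      have g1 : 2 - 2 * ⟪n, u⟫ ≤ L ^ 2 * (r ^ 2 - 2 * (r * ⟪n, e⟫) + m ^ 2) := by
        rw [← f8, ← f9]; exact f11
      have g3 : L ^ 2 * (r ^ 2 - 2 * (r * ⟪n, e⟫) + m ^ 2) ≤
          L ^ 2 * (r ^ 2 + m ^ 2) - 2 * r * ρ * L ^ 2 * ⟪n, u⟫ + 2 * r * L ^ 2 * s := by
        have h2 : (0:ℝ) ≤ 2 * r * L ^ 2 := by positivity
        linarith [mul_le_mul_of_nonneg_left f7 h2]
      have g4 : r * ⟪n, u⟫ ≤ m := le_trans f2' f3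
      have g5 : 0 ≤ 1 - L ^ 2 * r * ρ := by
        linarith [mul_le_mul_of_nonneg_left hcon.le (by positivity : (0:ℝ) ≤ L ^ 2 * r), hLr2]
      have G : 2 - 2 * ⟪n, u⟫ ≤ L ^ 2 * (r ^ 2 + m ^ 2) - 2 * r * ρ * L ^ 2 * ⟪n, u⟫ +
          2 * r * L ^ 2 * s := le_trans g1 g3
      linarith [mul_le_mul_of_nonneg_left G hr.le,
        mul_le_mul_of_nonneg_right g4 (by linarith : (0:ℝ) ≤ 2 * (1 - L ^ 2 * r * ρ))]
    have hψρ : 0 ≤ L ^ 2 * r * (r ^ 2 + ρ ^ 2) +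
        2 * r ^ 2 * L ^ 2 * Real.sqrt (ρ ^ 2 - ρ ^ 2) + 2 * ρ * (1 - L ^ 2 * r * ρ) - 2 * r :=
      by rwa [hclosed.closure_eq] at hmem
    simp only [sub_self, Real.sqrt_zero, mul_zero, add_zero] at hψρ
    -- contradiction
    have key2 : L ^ 2 * r * (r + ρ) < 2 := by
      have h1 := mul_pos (mul_pos (mul_pos hL hL) hr) (sub_pos.mpr hcon)
      nlinarith [hLr2]
    have key3 : (r - ρ) * (L ^ 2 * r * (r + ρ) - 2) < 0 :=
      mul_neg_of_pos_of_neg (by linarith) (by linarith)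
    nlinarith [key3, hψρ]
  -- conclusion
  refine ⟨z, (closedBall_subset_closedBall hρr).trans hballρ, ?_⟩
  have hballr : Metric.closedBall z r ⊆ V := (closedBall_subset_closedBall hρr).trans hballρ
  ext p
  constructor
  · rintro ⟨hps, hpF⟩
    rw [mem_sphere, dist_eq_norm] at hps
    obtain ⟨⟨hnp1, hnpsupp⟩, -⟩ := hNS p hpF
    set np := NS p with hnp
    clear_value np
    have hyb : z + r • np ∈ V := by
      apply hballr
      rw [mem_closedBall, dist_eq_norm, add_sub_cancel_left, norm_smul,
        Real.norm_eq_abs, abs_of_pos hr, hnp1, mul_one]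
    have h1 := hnpsupp _ hyb
    have h2 : z + r • np - p = r • np - (p - z) := by abel
    rw [h2, inner_sub_right, real_inner_smul_right, real_inner_self_eq_norm_mul_norm,
      hnp1] at h1
    have h3 : r ≤ ⟪np, p - z⟫ := by nlinarith
    have h4 : ⟪np, p - z⟫ ≤ r := by
      have := real_inner_le_norm np (p - z)
      rwa [hnp1, one_mul, hps] at this
    have heq : ⟪np, p - z⟫ = r := le_antisymm h4 h3
    have h5 : ‖(p - z) - r • np‖ ^ 2 = 0 := by
      rw [norm_sub_sq_real, real_inner_smul_right, real_inner_comm np (p - z), heq,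
        norm_smul, Real.norm_eq_abs, abs_of_pos hr, hnp1, hps]
      ring
    have h6 : p - z = r • np := by
      have := pow_eq_zero_iff (n := 2) (by norm_num) |>.mp h5
      rw [norm_eq_zero, sub_eq_zero] at this
      exact this
    have h7 : p - x = r • (np - n) := by
      rw [smul_sub, ← h6, ← hxz]; abel
    have hlip := hLip p hpF x hx
    rw [← hn, ← hnp] at hlip
    have h8 : ‖p - x‖ = r * ‖np - n‖ := by
      rw [h7, norm_smul, Real.norm_eq_abs, abs_of_pos hr]
    have h9 : ‖np - n‖ ≤ L * ‖p - x‖ := hlip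
    have h10 : ‖p - x‖ ≤ 0 := by nlinarith [norm_nonneg (p - x), norm_nonneg (np - n)]
    have : p - x = 0 := by
      rw [← norm_eq_zero] ; exact le_antisymm h10 (norm_nonneg _)
    simpa [sub_eq_zero] using this
  · rintro rfl
    exact ⟨by rw [mem_sphere, dist_eq_norm, hxznorm], hx⟩
end

section
/- Let X be a real Hilbert space and let V be a convex body in X of class C¹ with boundary S = ∂V and outer unit normal map N_S : S → S_X, and let L > 0. Suppose that for every r with 0 < r < 1/L the balls of radius r roll freely inside V on S, i.e., for every x ∈ S there exists z ∈ X such that the closed ball B(z, r) is contained in V and ∂B(z, r) ∩ S = {x}. Then ⟨N_S(y), y − x⟩ ≥ (1/(2L))·‖N_S(x) − N_S(y)‖² for all x, y ∈ S. -/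
open scoped RealInnerProductSpace
open Metric Set

variable {X : Type*} [NormedAddCommGroup X] [InnerProductSpace ℝ X]

theorem rolling_balls_imply_inequality [CompleteSpace X]
    (V : Set X) (hV : IsConvexBody V) (NS : X → X) (L : ℝ) (hL : 0 < L)
    (hNS : ∀ x ∈ frontier V, IsOutwardNormal V x (NS x) ∧
      ∀ u, IsOutwardNormal V x u → u = NS x)
    (hroll : ∀ r : ℝ, 0 < r → r < 1 / L → ∀ x ∈ frontier V, ∃ z : X,
      Metric.closedBall z r ⊆ V ∧ Metric.sphere z r ∩ frontier V = {x}) :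
    ∀ x ∈ frontier V, ∀ y ∈ frontier V,
      ⟪NS y, y - x⟫ ≥ 1 / (2 * L) * ‖NS x - NS y‖ ^ 2 := by
  intro x hx y hy
  obtain ⟨⟨hNx, hNx2⟩, -⟩ := hNS x hx
  obtain ⟨⟨hNy, hNy2⟩, -⟩ := hNS y hy
  set M : ℝ := ⟪NS y, y - x⟫ with hM
  set c : ℝ := 1 - ⟪NS y, NS x⟫ with hc
  have hcval : c = ‖NS x - NS y‖ ^ 2 / 2 := by
    have : ‖NS x - NS y‖ ^ 2 = 2 - 2 * ⟪NS x, NS y⟫ := by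
      rw [← real_inner_self_eq_norm_sq, inner_sub_sub_self,
        real_inner_self_eq_norm_sq, real_inner_self_eq_norm_sq, hNx, hNy,
        real_inner_comm (NS y) (NS x)]
      ring
    rw [hc, this, real_inner_comm]
    ring
  have hc0 : 0 ≤ c := by rw [hcval]; positivity
  have key : ∀ r : ℝ, 0 < r → r < 1 / L → r * c ≤ M := by
    intro r hr hr'
    obtain ⟨z, hball, hsph⟩ := hroll r hr hr' x hx
    have hxz : x ∈ Metric.sphere z r ∩ frontier V := by
      rw [hsph]; exact rfl
    have hdist : ‖x - z‖ = r := by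
      have := hxz.1
      rwa [mem_sphere_iff_norm] at this
    -- the point z + r • NS x lies in V
    have hp : z + r • NS x ∈ V := by
      apply hball
      rw [Metric.mem_closedBall, dist_eq_norm]
      simp [norm_smul, hNx, abs_of_pos hr, le_refl]
    have h1 : ⟪NS x, z - x⟫ + r ≤ 0 := by
      have := hNx2 _ hp
      have e : z + r • NS x - x = (z - x) + r • NS x := by abel
      rw [e, inner_add_right, real_inner_smul_right, real_inner_self_eq_norm_sq,
        hNx] at this
      linarith
    have h2 : ⟪NS x, x - z⟫ ≤ r := by
      calc ⟪NS x, x - z⟫ ≤ ‖NS x‖ * ‖x - z‖ := real_inner_le_norm _ _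
        _ = r := by rw [hNx, hdist, one_mul]
    have heq : ⟪NS x, x - z⟫ = ‖NS x‖ * ‖x - z‖ := by
      rw [hNx, hdist, one_mul]
      have h3 : r ≤ ⟪NS x, x - z⟫ := by
        have : ⟪NS x, x - z⟫ = -⟪NS x, z - x⟫ := by
          rw [← inner_neg_right]; congr 1; abel
        linarith [h1]
      linarith
    have hz : z = x - r • NS x := by
      have := (inner_eq_norm_mul_iff_real).mp heq
      rw [hdist, hNx, one_smul] at this
      -- this : r • NS x = x - z
      have : x - z = r • NS x := this.symm
      have : z = x - r • NS x := by
        rw [← this]; abel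
      exact this
    -- the point z + r • NS y lies in V
    have hq : z + r • NS y ∈ V := by
      apply hball
      rw [Metric.mem_closedBall, dist_eq_norm]
      simp [norm_smul, hNy, abs_of_pos hr, le_refl]
    have h4 := hNy2 _ hq
    rw [hz] at h4
    have e : x - r • NS x + r • NS y - y = (x - y) + r • NS y - r • NS x := by abel
    rw [e] at h4
    rw [inner_sub_right, inner_add_right, real_inner_smul_right,
      real_inner_smul_right, real_inner_self_eq_norm_sq, hNy] at h4
    have : ⟪NS y, y - x⟫ = -⟪NS y, x - y⟫ := by
      rw [← inner_neg_right]; congr 1; abel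
    rw [hM, this, hc]
    nlinarith [h4]
  -- pass to the limit r → 1/L
  have hfin : (1 / L) * c ≤ M := by
    by_contra h
    push_neg at h
    rcases hc0.lt_or_eq with hcpos | hczero
    · have hML : M / c < 1 / L := by
        rw [div_lt_iff₀ hcpos]
        linarith [h]
      have hmax : max (M / c) 0 < 1 / L := by
        apply max_lt hML
        positivity
      obtain ⟨r, hr1, hr2⟩ := exists_between hmax
      have hr0 : 0 < r := lt_of_le_of_lt (le_max_right _ _) hr1
      have := key r hr0 hr2
      have : M < r * c := by
        have := lt_of_le_of_lt (le_max_left (M / c) 0) hr1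
        rw [div_lt_iff₀ hcpos] at this
        linarith
      linarith [key r hr0 hr2]
    · have hr0 : (0:ℝ) < 1 / (2 * L) := by positivity
      have hr2 : 1 / (2 * L) < 1 / L := by
        rw [div_lt_div_iff₀ (by positivity) hL]
        linarith
      have := key (1 / (2 * L)) hr0 hr2
      rw [← hczero] at h this
      simp at this
      linarith
  calc M ≥ (1 / L) * c := hfin
    _ = 1 / (2 * L) * ‖NS x - NS y‖ ^ 2 := by rw [hcval]; ring
end

section
/- Let X be a real Hilbert space and let V be a bounded convex body in X of class C¹ with 0 ∈ int V, boundary S = ∂V and outer unit normal map N_S : S → S_X, and let μ_V denote the Minkowski functional (gauge) of V. Then N_S is Lipschitz on S if and only if for every α > 0 the gauge μ_V is Fréchet differentiable with Lipschitz gradient on the set {x ∈ X : μ_V(x) ≥ α}. -/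
/-!
Write `π x = (gauge V x)⁻¹ • x` for the radial projection onto `∂V`. If the normal field `N` is
Lipschitz, the vector `N (π x) / ⟪N (π x), π x⟫` is a subgradient of the convex gauge at `x`.
It is Lipschitz on `{α ≤ gauge V}` because `π` is, and because `⟪N z, z⟫ ≥ r` whenever the closed
ball of radius `r` lies in `V`; a convex function whose subgradients vary continuously is
differentiable, with these subgradients as gradients.

Conversely, at `z ∈ ∂V` the gradient of the convex gauge is a subgradient, so its normalization
is an outward unit normal, hence equals `N z`. As `⟪∇ gauge z, z⟫ ≥ 1` and `‖z‖ ≤ R`, the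
gradient has norm at least `1 / R`, and normalizing vectors of norm `≥ 1 / R` is Lipschitz.
-/

open scoped RealInnerProductSpace
open Metric Set

variable {X : Type*} [NormedAddCommGroup X] [InnerProductSpace ℝ X]

open scoped NNReal Topology
open Filter

theorem exists_norm_sub_le_mul_iff_exists_lipschitzOnWith {E F : Type*} [SeminormedAddCommGroup E]
    [SeminormedAddCommGroup F] {f : F → E} {s : Set F} :
    (∃ K : ℝ, ∀ x ∈ s, ∀ y ∈ s, ‖f x - f y‖ ≤ K * ‖x - y‖) ↔ ∃ K, LipschitzOnWith K f s := by
  constructor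
  · rintro ⟨K, hK⟩
    refine ⟨K.toNNReal, LipschitzOnWith.of_dist_le_mul fun x hx y hy => ?_⟩
    simp only [dist_eq_norm]
    exact (hK x hx y hy).trans (by gcongr; exact Real.le_coe_toNNReal K)
  · rintro ⟨K, hK⟩
    exact ⟨K, fun x hx y hy => hK.norm_sub_le hx hy⟩

section Lipschitz

variable {α E : Type*} [PseudoMetricSpace α] [SeminormedAddCommGroup E] [NormedSpace ℝ E]

theorem norm_inv_smul_sub_inv_smul_le (v w : E) {a b : ℝ} (ha : 0 < a) (hb : b ≠ 0) :
    ‖a⁻¹ • v - b⁻¹ • w‖ ≤ a⁻¹ * (‖v - w‖ + |a - b| * ‖b⁻¹ • w‖) := by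
  have hsplit : a⁻¹ • v - b⁻¹ • w = a⁻¹ • ((v - w) + (b - a) • b⁻¹ • w) := by
    have hcoef : a⁻¹ * (b - a) * b⁻¹ = a⁻¹ - b⁻¹ := by field_simp
    rw [smul_add, smul_smul, smul_smul, hcoef]
    module
  rw [hsplit, norm_smul, Real.norm_of_nonneg (inv_nonneg.2 ha.le), abs_sub_comm]
  gcongr
  exact (norm_add_le _ _).trans_eq (by rw [norm_smul, Real.norm_eq_abs])

theorem exists_lipschitzOnWith_inv_smul {a : α → ℝ} {v : α → E} {s : Set α} {c M : ℝ} {A B : ℝ≥0}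
    (hc : 0 < c) (hca : ∀ x ∈ s, c ≤ a x) (hM : ∀ x ∈ s, ‖(a x)⁻¹ • v x‖ ≤ M)
    (ha : LipschitzOnWith A a s) (hv : LipschitzOnWith B v s) :
    ∃ K, LipschitzOnWith K (fun x => (a x)⁻¹ • v x) s := by
  refine ⟨(c⁻¹ * (B + A * M)).toNNReal, LipschitzOnWith.of_dist_le_mul fun x hx y hy => ?_⟩
  have hax := hc.trans_le (hca x hx)
  have hM0 : 0 ≤ M := (norm_nonneg _).trans (hM x hx)
  calc dist ((a x)⁻¹ • v x) ((a y)⁻¹ • v y)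
      ≤ (a x)⁻¹ * (‖v x - v y‖ + |a x - a y| * ‖(a y)⁻¹ • v y‖) := by
        rw [dist_eq_norm]
        exact norm_inv_smul_sub_inv_smul_le _ _ hax (hc.trans_le (hca y hy)).ne'
    _ ≤ c⁻¹ * (B * dist x y + A * dist x y * M) := by
        gcongr
        · exact hca x hx
        · exact dist_eq_norm (v x) (v y) ▸ hv.dist_le_mul x hx y hy
        · exact Real.dist_eq (a x) (a y) ▸ ha.dist_le_mul x hx y hy
        · exact hM y hy
    _ ≤ (c⁻¹ * (B + A * M)).toNNReal * dist x y := by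
        rw [Real.coe_toNNReal _ (by positivity)]
        apply le_of_eq; ring

theorem exists_lipschitzOnWith_inner {u p : α → X} {s : Set α} {M N : ℝ} {A B : ℝ≥0}
    (hu : LipschitzOnWith A u s) (hp : LipschitzOnWith B p s)
    (hM : ∀ x ∈ s, ‖u x‖ ≤ M) (hN : ∀ x ∈ s, ‖p x‖ ≤ N) :
    ∃ K, LipschitzOnWith K (fun x => ⟪u x, p x⟫) s := by
  refine ⟨(A * N + M * B).toNNReal, LipschitzOnWith.of_dist_le_mul fun x hx y hy => ?_⟩
  have hM0 : 0 ≤ M := (norm_nonneg _).trans (hM x hx)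
  have hN0 : 0 ≤ N := (norm_nonneg _).trans (hN x hx)
  have hsplit : ⟪u x, p x⟫ - ⟪u y, p y⟫ = ⟪u x - u y, p x⟫ + ⟪u y, p x - p y⟫ := by
    rw [inner_sub_left, inner_sub_right]; ring
  calc dist ⟪u x, p x⟫ ⟪u y, p y⟫
      ≤ ‖u x - u y‖ * ‖p x‖ + ‖u y‖ * ‖p x - p y‖ := by
        rw [Real.dist_eq, hsplit]
        exact (abs_add_le _ _).trans
          (add_le_add (abs_real_inner_le_norm _ _) (abs_real_inner_le_norm _ _))
    _ ≤ A * dist x y * N + M * (B * dist x y) := by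
        gcongr
        · exact dist_eq_norm (u x) (u y) ▸ hu.dist_le_mul x hx y hy
        · exact hN x hx
        · exact hM y hy
        · exact dist_eq_norm (p x) (p y) ▸ hp.dist_le_mul x hx y hy
    _ ≤ (A * N + M * B).toNNReal * dist x y := by
        rw [Real.coe_toNNReal _ (by positivity)]
        apply le_of_eq; ring

end Lipschitz

def HasSubgradientAt (f : X → ℝ) (g x : X) : Prop :=
  ∀ y, ⟪g, y - x⟫ ≤ f y - f x

theorem ConvexOn.inner_sub_le_of_hasGradientAt [CompleteSpace X] {s : Set X} {f : X → ℝ}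
    {g x y : X} (hf : ConvexOn ℝ s f) (hx : x ∈ s) (hy : y ∈ s) (hg : HasGradientAt f g x) :
    ⟪g, y - x⟫ ≤ f y - f x := by
  let ℓ : ℝ →ᵃ[ℝ] X := AffineMap.lineMap x y
  have hℓ : ConvexOn ℝ (ℓ ⁻¹' s) (f ∘ ℓ) := hf.comp_affineMap ℓ
  have hderiv : HasDerivAt (f ∘ ℓ) ⟪g, y - x⟫ 0 := by
    have hf' : HasFDerivAt f (InnerProductSpace.toDual ℝ X g) (ℓ 0) := by
      simpa [ℓ] using hasGradientAt_iff_hasFDerivAt.1 hg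
    simpa using hf'.comp_hasDerivAt 0 AffineMap.hasDerivAt_lineMap
  have := hℓ.le_slope_of_hasDerivAt (x := 0) (y := 1) (by simpa [ℓ]) (by simpa [ℓ]) one_pos hderiv
  simpa [slope_def_field, ℓ] using this

theorem hasGradientAt_of_hasSubgradientAt [CompleteSpace X] {f : X → ℝ} {g : X → X} {x : X}
    (hsub : ∀ᶠ y in 𝓝 x, HasSubgradientAt f (g y) y) (hg : ContinuousAt g x) :
    HasGradientAt f (g x) x := by
  rw [hasGradientAt_iff_isLittleO, Asymptotics.isLittleO_iff]
  intro c hc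
  have hgc : ∀ᶠ y in 𝓝 x, ‖g y - g x‖ ≤ c := by
    filter_upwards [hg.eventually (closedBall_mem_nhds _ hc)] with y hy
    rwa [dist_eq_norm] at hy
  filter_upwards [hsub, hgc] with y hy hyc
  -- `f y - f x - ⟪g x, y - x⟫` lies between `0` and `⟪g y - g x, y - x⟫`.
  have hlow := hsub.self_of_nhds y
  have hup := hy x
  have hcs : ⟪g y - g x, y - x⟫ ≤ c * ‖y - x‖ :=
    (real_inner_le_norm _ _).trans (mul_le_mul_of_nonneg_right hyc (norm_nonneg _))
  have hswap : ⟪g y, x - y⟫ = -⟪g y, y - x⟫ := by rw [← inner_neg_right, neg_sub]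
  rw [inner_sub_left] at hcs
  rw [Real.norm_eq_abs, abs_le]
  constructor <;> linarith [mul_nonneg hc.le (norm_nonneg (y - x))]

theorem norm_le_of_mem_frontier {E : Type*} [SeminormedAddCommGroup E] {s : Set E} {R : ℝ}
    (hR : s ⊆ closedBall 0 R) {z : E} (hz : z ∈ frontier s) : ‖z‖ ≤ R :=
  mem_closedBall_zero_iff.1 (closure_minimal hR isClosed_closedBall (frontier_subset_closure hz))

section Gauge

variable {V : Set X}

theorem inner_le_mul_gauge (hV : Absorbent ℝ V) {u : X} {c : ℝ} (hu : ∀ w ∈ V, ⟪u, w⟫ ≤ c)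
    (y : X) : ⟪u, y⟫ ≤ c * gauge V y := by
  have hc : 0 ≤ c := by simpa using hu 0 hV.zero_mem
  have hlim : Tendsto (fun t => c * t) (𝓝[>] gauge V y) (𝓝 (c * gauge V y)) :=
    ((continuous_const_mul c).tendsto _).mono_left nhdsWithin_le_nhds
  refine ge_of_tendsto hlim ?_
  filter_upwards [self_mem_nhdsWithin] with t (ht : gauge V y < t)
  obtain ⟨b, hb, hbt, w, hw, rfl⟩ := exists_lt_of_gauge_lt hV ht
  calc ⟪u, b • w⟫ = b * ⟪u, w⟫ := real_inner_smul_right _ _ _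
    _ ≤ b * c := mul_le_mul_of_nonneg_left (hu w hw) hb.le
    _ ≤ c * t := by rw [mul_comm]; gcongr

theorem convexOn_gauge (hc : Convex ℝ V) (hV : Absorbent ℝ V) : ConvexOn ℝ univ (gauge V) := by
  refine ⟨convex_univ, fun x _ y _ a b ha hb _ => ?_⟩
  calc gauge V (a • x + b • y) ≤ gauge V (a • x) + gauge V (b • y) := gauge_add_le hc hV _ _
    _ = a • gauge V x + b • gauge V y := by
      rw [gauge_smul_of_nonneg ha, gauge_smul_of_nonneg hb]

theorem IsOutwardNormal.inner_le_mul_gauge {z u : X} (hV : Absorbent ℝ V)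
    (hu : IsOutwardNormal V z u) (y : X) : ⟪u, y⟫ ≤ ⟪u, z⟫ * gauge V y :=
  _root_.inner_le_mul_gauge hV
    (fun w hw => by linarith [inner_sub_right (𝕜 := ℝ) u w z ▸ hu.2 w hw]) y

theorem IsOutwardNormal.le_inner {z u : X} {r : ℝ} (hr : 0 ≤ r) (hrV : closedBall 0 r ⊆ V)
    (hu : IsOutwardNormal V z u) : r ≤ ⟪u, z⟫ := by
  have hmem : r • u ∈ V := hrV (by simp [norm_smul, hu.1, abs_of_nonneg hr])
  have := hu.2 _ hmem
  rw [inner_sub_right, real_inner_smul_right, real_inner_self_eq_norm_sq, hu.1] at this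
  linarith

theorem HasSubgradientAt.one_le_inner {g z : X} (hz : gauge V z = 1)
    (hg : HasSubgradientAt (gauge V) g z) : 1 ≤ ⟪g, z⟫ := by
  have := hg 0
  rw [zero_sub, inner_neg_right, gauge_zero, hz] at this
  linarith

theorem HasSubgradientAt.isOutwardNormal {g z : X} (hz : gauge V z = 1)
    (hg : HasSubgradientAt (gauge V) g z) : IsOutwardNormal V z (‖g‖⁻¹ • g) := by
  have hg0 : g ≠ 0 := by
    rintro rfl
    have := hg.one_le_inner hz
    rw [inner_zero_left] at this
    linarith
  refine ⟨norm_smul_inv_norm hg0, fun w hw => ?_⟩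
  have := hg w
  rw [hz] at this
  rw [real_inner_smul_left]
  exact mul_nonpos_of_nonneg_of_nonpos (by positivity) (by linarith [gauge_le_one_of_mem hw])

noncomputable def radialProjection (V : Set X) (x : X) : X :=
  (gauge V x)⁻¹ • x

theorem gauge_radialProjection {x : X} (hx : 0 < gauge V x) :
    gauge V (radialProjection V x) = 1 := by
  rw [radialProjection, gauge_smul_of_nonneg (inv_nonneg.2 hx.le), smul_eq_mul,
    inv_mul_cancel₀ hx.ne']

theorem radialProjection_mem_frontier (hc : Convex ℝ V) (h0 : V ∈ 𝓝 0) {x : X}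
    (hx : 0 < gauge V x) : radialProjection V x ∈ frontier V :=
  (gauge_eq_one_iff_mem_frontier hc h0).1 (gauge_radialProjection hx)

theorem exists_lipschitzOnWith_radialProjection (hc : Convex ℝ V) (h0 : V ∈ 𝓝 0) {R β : ℝ}
    (hR : V ⊆ closedBall 0 R) (hβ : 0 < β) :
    ∃ K, LipschitzOnWith K (radialProjection V) {x | β ≤ gauge V x} := by
  obtain ⟨A, hA⟩ := hc.lipschitz_gauge h0
  exact exists_lipschitzOnWith_inv_smul (v := id) hβ (fun x hx => hx)
    (fun x hx =>
      norm_le_of_mem_frontier hR (radialProjection_mem_frontier hc h0 (hβ.trans_le hx)))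
    hA.lipschitzOnWith LipschitzWith.id.lipschitzOnWith

/-- If `N z` is an outward unit normal at `z ∈ ∂V`, the functional `N z / ⟪N z, z⟫` is bounded by
`gauge V` and agrees with it on the ray through `z`, so it is the candidate gradient there. -/
noncomputable def gaugeGradient (V : Set X) (N : X → X) (x : X) : X :=
  ⟪N (radialProjection V x), radialProjection V x⟫⁻¹ • N (radialProjection V x)

variable {N : X → X}

theorem hasSubgradientAt_gaugeGradient (hc : Convex ℝ V) (h0 : V ∈ 𝓝 0)
    (hN : ∀ z ∈ frontier V, IsOutwardNormal V z (N z)) {x : X} (hx : 0 < gauge V x) :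
    HasSubgradientAt (gauge V) (gaugeGradient V N x) x := by
  set z := radialProjection V x with hz_def
  have hu := hN z (radialProjection_mem_frontier hc h0 hx)
  obtain ⟨r, hr, hrV⟩ := nhds_basis_closedBall.mem_iff.1 h0
  have hs : 0 < ⟪N z, z⟫ := hr.trans_le (hu.le_inner hr.le hrV)
  have hxz : x = gauge V x • z := by
    rw [hz_def, radialProjection, smul_smul, mul_inv_cancel₀ hx.ne', one_smul]
  have hux : ⟪N z, x⟫ = ⟪N z, z⟫ * gauge V x := by
    conv_lhs => rw [hxz]
    rw [real_inner_smul_right, mul_comm]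
  intro y
  have huy := hu.inner_le_mul_gauge (absorbent_nhds_zero h0) y
  rw [gaugeGradient, ← hz_def, inner_sub_right, real_inner_smul_left, real_inner_smul_left, hux,
    inv_mul_cancel_left₀ hs.ne']
  have : ⟪N z, z⟫⁻¹ * ⟪N z, y⟫ ≤ gauge V y := by
    rw [inv_mul_le_iff₀ hs]; exact huy
  linarith

theorem exists_lipschitzOnWith_gaugeGradient (hc : Convex ℝ V) (h0 : V ∈ 𝓝 0) {R β : ℝ} {K : ℝ≥0}
    (hR : V ⊆ closedBall 0 R) (hN : ∀ z ∈ frontier V, IsOutwardNormal V z (N z))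
    (hNlip : LipschitzOnWith K N (frontier V)) (hβ : 0 < β) :
    ∃ K', LipschitzOnWith K' (gaugeGradient V N) {x | β ≤ gauge V x} := by
  have hmaps : MapsTo (radialProjection V) {x | β ≤ gauge V x} (frontier V) :=
    fun x hx => radialProjection_mem_frontier hc h0 (hβ.trans_le hx)
  obtain ⟨Kπ, hπ⟩ := exists_lipschitzOnWith_radialProjection hc h0 hR hβ
  have hNπ := hNlip.comp hπ hmaps
  obtain ⟨Ks, hs⟩ := exists_lipschitzOnWith_inner hNπ hπ
    (fun x hx => (hN _ (hmaps hx)).1.le) (fun x hx => norm_le_of_mem_frontier hR (hmaps hx))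
  obtain ⟨r, hr, hrV⟩ := nhds_basis_closedBall.mem_iff.1 h0
  have hsr : ∀ x ∈ {x | β ≤ gauge V x},
      r ≤ ⟪N (radialProjection V x), radialProjection V x⟫ :=
    fun x hx => (hN _ (hmaps hx)).le_inner hr.le hrV
  refine exists_lipschitzOnWith_inv_smul (M := r⁻¹) hr hsr (fun x hx => ?_) hs hNπ
  rw [norm_smul, (hN _ (hmaps hx)).1, mul_one, norm_inv, Real.norm_eq_abs,
    abs_of_pos (hr.trans_le (hsr x hx))]
  exact inv_anti₀ hr (hsr x hx)

theorem hasGradientAt_gaugeGradient [CompleteSpace X] (hc : Convex ℝ V) (h0 : V ∈ 𝓝 0) {R : ℝ}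
    {K : ℝ≥0} (hR : V ⊆ closedBall 0 R) (hN : ∀ z ∈ frontier V, IsOutwardNormal V z (N z))
    (hNlip : LipschitzOnWith K N (frontier V)) {x : X} (hx : 0 < gauge V x) :
    HasGradientAt (gauge V) (gaugeGradient V N x) x := by
  have hcont := (continuous_gauge hc h0).continuousAt (x := x)
  obtain ⟨K', hK'⟩ := exists_lipschitzOnWith_gaugeGradient hc h0 hR hN hNlip (half_pos hx)
  refine hasGradientAt_of_hasSubgradientAt ?_
    (hK'.continuousOn.continuousAt (hcont (Ici_mem_nhds (half_lt_self hx))))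
  filter_upwards [hcont (Ioi_mem_nhds hx)] with y hy
  exact hasSubgradientAt_gaugeGradient hc h0 hN hy

theorem exists_lipschitzOnWith_normal_of_hasGradientAt [CompleteSpace X] (hc : Convex ℝ V)
    (h0 : V ∈ 𝓝 0) {R : ℝ} (hR0 : 0 < R) (hR : V ⊆ closedBall 0 R) {N g : X → X} {K : ℝ≥0}
    (hN : ∀ z ∈ frontier V, ∀ u, IsOutwardNormal V z u → u = N z)
    (hg : ∀ z ∈ frontier V, HasGradientAt (gauge V) (g z) z)
    (hglip : LipschitzOnWith K g (frontier V)) :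
    ∃ K', LipschitzOnWith K' N (frontier V) := by
  have hsub : ∀ z ∈ frontier V, HasSubgradientAt (gauge V) (g z) z := fun z hz y =>
    (convexOn_gauge hc (absorbent_nhds_zero h0)).inner_sub_le_of_hasGradientAt
      (mem_univ z) (mem_univ y) (hg z hz)
  have hgauge : ∀ z ∈ frontier V, gauge V z = 1 := fun z hz =>
    (gauge_eq_one_iff_mem_frontier hc h0).2 hz
  have hnormal : ∀ z ∈ frontier V, IsOutwardNormal V z (‖g z‖⁻¹ • g z) := fun z hz =>
    (hsub z hz).isOutwardNormal (hgauge z hz)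
  have hNg : ∀ z ∈ frontier V, N z = ‖g z‖⁻¹ • g z := fun z hz => (hN z hz _ (hnormal z hz)).symm
  have hgR : ∀ z ∈ frontier V, R⁻¹ ≤ ‖g z‖ := fun z hz => by
    rw [inv_le_iff_one_le_mul₀ hR0]
    calc 1 ≤ ⟪g z, z⟫ := (hsub z hz).one_le_inner (hgauge z hz)
      _ ≤ ‖g z‖ * ‖z‖ := real_inner_le_norm _ _
      _ ≤ ‖g z‖ * R := by gcongr; exact norm_le_of_mem_frontier hR hz
  obtain ⟨K', hK'⟩ := exists_lipschitzOnWith_inv_smul (M := 1) (inv_pos.2 hR0) hgR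
    (fun z hz => (hnormal z hz).1.le)
    (lipschitzWith_one_norm.comp_lipschitzOnWith hglip) hglip
  exact ⟨K', fun x hx y hy => by simpa only [hNg x hx, hNg y hy] using hK' hx hy⟩

end Gauge

theorem gauss_map_lipschitz_iff_gauge_C11 [CompleteSpace X]
    (V : Set X) (hV : IsConvexBody V) (hVb : Bornology.IsBounded V)
    (h0 : (0:X) ∈ interior V) (NS : X → X)
    (hNS : ∀ x ∈ frontier V, IsOutwardNormal V x (NS x) ∧
      ∀ u, IsOutwardNormal V x u → u = NS x) :
    (∃ K : ℝ, ∀ x ∈ frontier V, ∀ y ∈ frontier V, ‖NS x - NS y‖ ≤ K * ‖x - y‖) ↔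
    (∀ α > (0:ℝ), ∃ (g : X → X) (K : ℝ),
      (∀ x : X, α ≤ gauge V x → HasGradientAt (gauge V) (g x) x) ∧
      (∀ x y : X, α ≤ gauge V x → α ≤ gauge V y → ‖g x - g y‖ ≤ K * ‖x - y‖)) := by
  have hc : Convex ℝ V := hV.2.1
  have h0' : V ∈ 𝓝 0 := mem_interior_iff_mem_nhds.1 h0
  obtain ⟨R, hR0, hR⟩ := hVb.subset_closedBall_lt 0 0
  have hN : ∀ z ∈ frontier V, IsOutwardNormal V z (NS z) := fun z hz => (hNS z hz).1
  rw [exists_norm_sub_le_mul_iff_exists_lipschitzOnWith]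
  constructor
  · rintro ⟨K, hK⟩ α hα
    obtain ⟨K', hK'⟩ := exists_lipschitzOnWith_gaugeGradient hc h0' hR hN hK hα
    exact ⟨gaugeGradient V NS, K',
      fun x hx => hasGradientAt_gaugeGradient hc h0' hR hN hK (hα.trans_le hx),
      fun x y hx hy => hK'.norm_sub_le hx hy⟩
  · intro h
    obtain ⟨g, K, hg, hK⟩ := h 1 one_pos
    have hS : ∀ z ∈ frontier V, 1 ≤ gauge V z := fun z hz =>
      ((gauge_eq_one_iff_mem_frontier hc h0').2 hz).ge
    obtain ⟨K', hK'⟩ := exists_norm_sub_le_mul_iff_exists_lipschitzOnWith.1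
      ⟨K, fun x hx y hy => hK x y (hS x hx) (hS y hy)⟩
    exact exists_lipschitzOnWith_normal_of_hasGradientAt hc h0' hR0 hR (fun z hz => (hNS z hz).2)
      (fun z hz => hg z (hS z hz)) hK'
end

section
/- Let X be a separable infinite-dimensional real Hilbert space with orthonormal basis (e_n)_{n∈ℕ}, and define W = {x ∈ X : Σ_{n=1}^∞ ⟨e_n, x⟩²/(1 + 2^{−n})² ≤ 1}. Then W is a bounded closed convex set with nonempty interior, the closed unit ball B(0,1) is contained in the interior of W, dist(0, ∂W) = 1, and this distance is not attained, i.e., there is no z ∈ ∂W with ‖z‖ = 1. -/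
open scoped RealInnerProductSpace
open Metric Set

noncomputable def aF (n : ℕ) : ℝ := 1 + (2:ℝ) ^ (-(n:ℝ) - 1)

lemma two_rpow_eq (n : ℕ) : (2:ℝ) ^ (-(n:ℝ) - 1) = (1/2:ℝ) ^ (n+1) := by
  have h : -(n:ℝ) - 1 = -((n+1 : ℕ) : ℝ) := by push_cast; ring
  rw [h, Real.rpow_neg (by norm_num : (0:ℝ) ≤ 2), Real.rpow_natCast, one_div, inv_pow]

lemma aF_gt_one (n : ℕ) : 1 < aF n := by
  have := Real.rpow_pos_of_pos (by norm_num : (0:ℝ) < 2) (-(n:ℝ) - 1)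
  unfold aF; linarith

lemma aF_pos (n : ℕ) : 0 < aF n := one_pos.trans (aF_gt_one n)

lemma aF_le (n : ℕ) : aF n ≤ 3/2 := by
  unfold aF
  rw [two_rpow_eq]
  have h1 : (1/2:ℝ)^(n+1) ≤ (1/2:ℝ)^1 :=
    pow_le_pow_of_le_one (by norm_num) (by norm_num) (by omega)
  norm_num at h1 ⊢
  linarith

lemma aF_sq_ge_one (n : ℕ) : 1 ≤ (aF n)^2 := by nlinarith [aF_gt_one n]

lemma aF_sq_gt_one (n : ℕ) : 1 < (aF n)^2 := by nlinarith [aF_gt_one n]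

lemma aF_sq_pos (n : ℕ) : 0 < (aF n)^2 := pow_pos (aF_pos n) 2

section Aux

variable {X : Type*} [NormedAddCommGroup X] [InnerProductSpace ℝ X] [CompleteSpace X]
  (e : HilbertBasis ℕ ℝ X)

/-- the coefficient sequence -/
noncomputable def gF (x : X) (n : ℕ) : ℝ := ⟪(e n : X), x⟫ ^ 2 / (aF n) ^ 2

/-- the defining functional of `W` -/
noncomputable def fF (x : X) : ℝ := ∑' n, gF e x n

/-- the set `W` -/
def SF : Set X := {x : X | fF e x ≤ 1}

lemma hasSum_sq (x : X) : HasSum (fun n => ⟪(e n : X), x⟫ ^ 2) (‖x‖^2) := by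
  have h := e.hasSum_inner_mul_inner x x
  rw [real_inner_self_eq_norm_sq] at h
  have hfun : (fun n => ⟪(e n : X), x⟫ ^ 2) = fun n => ⟪x, (e n : X)⟫ * ⟪(e n : X), x⟫ := by
    funext n; rw [sq, real_inner_comm]
  rw [hfun]
  exact h

lemma gF_nonneg (x : X) (n : ℕ) : 0 ≤ gF e x n := div_nonneg (sq_nonneg _) (sq_nonneg _)

lemma gF_le (x : X) (n : ℕ) : gF e x n ≤ ⟪(e n : X), x⟫ ^ 2 :=
  div_le_self (sq_nonneg _) (aF_sq_ge_one n)

lemma gF_summable (x : X) : Summable (gF e x) :=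
  Summable.of_nonneg_of_le (gF_nonneg e x) (gF_le e x) (hasSum_sq e x).summable

lemma fF_nonneg (x : X) : 0 ≤ fF e x := tsum_nonneg (gF_nonneg e x)

lemma fF_le (x : X) : fF e x ≤ ‖x‖^2 := by
  calc fF e x ≤ ∑' n, ⟪(e n : X), x⟫ ^ 2 :=
        Summable.tsum_le_tsum (gF_le e x) (gF_summable e x) (hasSum_sq e x).summable
    _ = ‖x‖^2 := (hasSum_sq e x).tsum_eq

lemma fF_zero : fF e 0 = 0 := by
  unfold fF gF
  simp

lemma fF_lt (x : X) (hx : x ≠ 0) : fF e x < ‖x‖^2 := by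
  obtain ⟨n, hn⟩ : ∃ n, ⟪(e n : X), x⟫ ≠ 0 := by
    by_contra h
    push_neg at h
    have hzero : (fun n => ⟪(e n : X), x⟫ ^ 2) = fun _ : ℕ => (0:ℝ) := by
      funext n; rw [h n]; ring
    have h1 := hasSum_sq e x
    rw [hzero] at h1
    have h2 := h1.unique hasSum_zero
    have h3 : ‖x‖ = 0 := by nlinarith [norm_nonneg x]
    exact hx (norm_eq_zero.mp h3)
  have hlt : gF e x n < ⟪(e n : X), x⟫ ^ 2 := by
    apply div_lt_self _ (aF_sq_gt_one n)
    exact lt_of_le_of_ne (sq_nonneg _) (Ne.symm (pow_ne_zero 2 hn))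
  calc fF e x < ∑' n, ⟪(e n : X), x⟫ ^ 2 :=
        Summable.tsum_lt_tsum (gF_le e x) hlt (gF_summable e x) (hasSum_sq e x).summable
    _ = ‖x‖^2 := (hasSum_sq e x).tsum_eq

lemma fF_almost_triangle {ε : ℝ} (hε : 0 < ε) (x y : X) :
    fF e (x + y) ≤ (1+ε) * fF e x + (1+1/ε) * fF e y := by
  have hterm : ∀ n, gF e (x + y) n ≤ (1+ε) * gF e x n + (1+1/ε) * gF e y n := by
    intro n
    unfold gF
    rw [inner_add_right]
    set u := ⟪(e n : X), x⟫ with hu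
    set v := ⟪(e n : X), y⟫ with hv
    have h3 : (1/ε) * v^2 * ε = v^2 := by field_simp
    have h1 : (u+v)^2 ≤ (1+ε)*u^2 + (1+1/ε)*v^2 := by
      nlinarith [sq_nonneg (ε*u - v), hε, h3]
    calc (u+v)^2 / (aF n)^2 ≤ ((1+ε)*u^2 + (1+1/ε)*v^2) / (aF n)^2 :=
          (div_le_div_iff_of_pos_right (aF_sq_pos n)).mpr h1
      _ = (1+ε) * (u^2/(aF n)^2) + (1+1/ε) * (v^2/(aF n)^2) := by ring
  have hsum1 : fF e (x+y) ≤ ∑' n, ((1+ε) * gF e x n + (1+1/ε) * gF e y n) :=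
    Summable.tsum_le_tsum hterm (gF_summable e _)
      (((gF_summable e x).mul_left _).add ((gF_summable e y).mul_left _))
  rw [Summable.tsum_add ((gF_summable e x).mul_left _) ((gF_summable e y).mul_left _),
    tsum_mul_left, tsum_mul_left] at hsum1
  exact hsum1

lemma SF_closed : IsClosed (SF e) := by
  have hrepr : SF e = ⋂ (F : Finset ℕ), {x : X | ∑ n ∈ F, gF e x n ≤ 1} := by
    ext x
    simp only [SF, mem_setOf_eq, mem_iInter]
    constructor
    · intro hx F
      exact le_trans (Summable.sum_le_tsum F (fun n _ => gF_nonneg e x n) (gF_summable e x)) hx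
    · intro hx
      exact Summable.tsum_le_of_sum_le (gF_summable e x) hx
  rw [hrepr]
  refine isClosed_iInter fun F => isClosed_le ?_ continuous_const
  refine continuous_finset_sum F fun n _ => ?_
  show Continuous fun x : X => ⟪(e n : X), x⟫ ^ 2 / (aF n) ^ 2
  exact ((Continuous.inner continuous_const continuous_id).pow 2).div_const _

lemma SF_convex : Convex ℝ (SF e) := by
  intro x hx y hy p q hp hq hpq
  simp only [SF, mem_setOf_eq] at hx hy ⊢
  have hterm : ∀ n, gF e (p • x + q • y) n ≤ p * gF e x n + q * gF e y n := by
    intro n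
    unfold gF
    rw [inner_add_right, real_inner_smul_right, real_inner_smul_right]
    set u := ⟪(e n : X), x⟫ with hu
    set v := ⟪(e n : X), y⟫ with hv
    have h1 : (p*u + q*v)^2 ≤ p * u^2 + q * v^2 := by
      nlinarith [mul_nonneg (mul_nonneg hp hq) (sq_nonneg (u - v)), hpq]
    calc (p*u + q*v)^2 / (aF n)^2 ≤ (p*u^2 + q*v^2) / (aF n)^2 :=
          (div_le_div_iff_of_pos_right (aF_sq_pos n)).mpr h1
      _ = p * (u^2/(aF n)^2) + q * (v^2/(aF n)^2) := by ring
  have hsum1 : fF e (p • x + q • y) ≤ ∑' n, (p * gF e x n + q * gF e y n) :=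
    Summable.tsum_le_tsum hterm (gF_summable e _)
      (((gF_summable e x).mul_left _).add ((gF_summable e y).mul_left _))
  rw [Summable.tsum_add ((gF_summable e x).mul_left _) ((gF_summable e y).mul_left _),
    tsum_mul_left, tsum_mul_left] at hsum1
  calc fF e (p • x + q • y) ≤ p * fF e x + q * fF e y := hsum1
    _ ≤ p * 1 + q * 1 := add_le_add (mul_le_mul_of_nonneg_left hx hp)
        (mul_le_mul_of_nonneg_left hy hq)
    _ = 1 := by linarith

lemma mem_interior_SF {x : X} (hx : fF e x < 1) : x ∈ interior (SF e) := by
  set c := fF e x with hc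
  have hc0 : 0 ≤ c := fF_nonneg e x
  set ε : ℝ := (1-c)/2 with hεdef
  have hε : 0 < ε := by rw [hεdef]; linarith
  have hKpos : (0:ℝ) < 1 + 1/ε := by positivity
  set δsq : ℝ := (1-c)/(2*(1+1/ε)) with hδdef
  have hδsqpos : 0 < δsq := by
    rw [hδdef]
    exact div_pos (by linarith) (by linarith)
  set δ := Real.sqrt δsq with hδ
  have hδpos : 0 < δ := Real.sqrt_pos.mpr hδsqpos
  refine mem_interior.mpr ⟨ball x δ, ?_, isOpen_ball, mem_ball_self hδpos⟩
  intro y hy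
  show fF e y ≤ 1
  have h2 := fF_almost_triangle e hε x (y - x)
  rw [add_sub_cancel] at h2
  have h3 : fF e (y - x) ≤ ‖y - x‖^2 := fF_le e _
  have h4 : ‖y - x‖ < δ := by rwa [mem_ball, dist_eq_norm] at hy
  have h5 : ‖y - x‖^2 ≤ δsq := by
    have h6 : ‖y - x‖^2 ≤ δ^2 := pow_le_pow_left₀ (norm_nonneg _) h4.le 2
    rwa [hδ, Real.sq_sqrt hδsqpos.le] at h6
  have hfrac : (1+1/ε) * δsq = (1-c)/2 := by
    rw [hδdef]
    field_simp
  have hεc : (1+ε)*c ≤ c + ε := by nlinarith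
  have h7 : fF e y ≤ (1+ε)*c + (1+1/ε)*δsq := by
    have h8 : (1+1/ε) * fF e (y - x) ≤ (1+1/ε) * δsq :=
      mul_le_mul_of_nonneg_left (h3.trans h5) hKpos.le
    linarith
  rw [hfrac] at h7
  linarith [hεdef]

lemma closedBall_subset_interior_SF : closedBall (0:X) 1 ⊆ interior (SF e) := by
  intro x hx
  rw [mem_closedBall, dist_zero_right] at hx
  rcases eq_or_ne x 0 with h0 | h0
  · apply mem_interior_SF
    rw [h0, fF_zero]
    norm_num
  · apply mem_interior_SF
    calc fF e x < ‖x‖^2 := fF_lt e x h0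
      _ ≤ 1 := by nlinarith [norm_nonneg x]

lemma SF_bounded : Bornology.IsBounded (SF e) := by
  apply (isBounded_closedBall (x := (0:X)) (r := 3/2)).subset
  intro x hx
  have hx1 : fF e x ≤ 1 := hx
  have hterm : ∀ n, ⟪(e n : X), x⟫ ^ 2 ≤ 9/4 * gF e x n := by
    intro n
    unfold gF
    have hne : (aF n)^2 ≠ 0 := (aF_sq_pos n).ne'
    have heq : ⟪(e n : X), x⟫ ^ 2 = (⟪(e n : X), x⟫ ^ 2 / (aF n)^2) * (aF n)^2 :=
      (div_mul_cancel₀ _ hne).symm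
    have ha2 : (aF n)^2 ≤ 9/4 := by nlinarith [aF_le n, aF_pos n]
    calc ⟪(e n : X), x⟫ ^ 2 = (⟪(e n : X), x⟫ ^ 2 / (aF n)^2) * (aF n)^2 := heq
      _ ≤ (⟪(e n : X), x⟫ ^ 2 / (aF n)^2) * (9/4) :=
          mul_le_mul_of_nonneg_left ha2 (div_nonneg (sq_nonneg _) (sq_nonneg _))
      _ = 9/4 * (⟪(e n : X), x⟫ ^ 2 / (aF n)^2) := mul_comm _ _
  have h1 : ‖x‖^2 ≤ 9/4 * fF e x := by
    calc ‖x‖^2 = ∑' n, ⟪(e n : X), x⟫ ^ 2 := (hasSum_sq e x).tsum_eq.symm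
      _ ≤ ∑' n, 9/4 * gF e x n :=
          Summable.tsum_le_tsum hterm (hasSum_sq e x).summable ((gF_summable e x).mul_left _)
      _ = 9/4 * fF e x := tsum_mul_left
  rw [mem_closedBall, dist_zero_right]
  nlinarith [norm_nonneg x]

lemma norm_basis (n : ℕ) : ‖(e n : X)‖ = 1 := e.orthonormal.1 n

lemma fF_smul_basis (n : ℕ) (s : ℝ) : fF e (s • (e n : X)) = s^2 / (aF n)^2 := by
  unfold fF
  rw [tsum_eq_single n]
  · show ⟪(e n : X), s • (e n : X)⟫ ^ 2 / (aF n)^2 = s^2/(aF n)^2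
    have h1 : ⟪(e n : X), (e n : X)⟫ = 1 := by
      rw [real_inner_self_eq_norm_sq, norm_basis]
      norm_num
    rw [real_inner_smul_right, h1, mul_one]
  · intro m hm
    show ⟪(e m : X), s • (e n : X)⟫ ^ 2 / (aF m)^2 = 0
    rw [real_inner_smul_right, e.orthonormal.2 hm]
    simp

lemma zF_mem_frontier (n : ℕ) : aF n • (e n : X) ∈ frontier (SF e) := by
  rw [(SF_closed e).frontier_eq]
  constructor
  · show fF e (aF n • (e n : X)) ≤ 1
    rw [fF_smul_basis, div_self (aF_sq_pos n).ne']
  · intro hmem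
    obtain ⟨δ, hδ, hball⟩ := Metric.mem_nhds_iff.mp (mem_interior_iff_mem_nhds.mp hmem)
    have hwball : (aF n + δ/2) • (e n : X) ∈ ball (aF n • (e n : X)) δ := by
      rw [mem_ball, dist_eq_norm, ← sub_smul, norm_smul, norm_basis, mul_one,
        Real.norm_eq_abs]
      rw [show aF n + δ/2 - aF n = δ/2 by ring, abs_of_pos (by linarith)]
      linarith
    have hwS : fF e ((aF n + δ/2) • (e n : X)) ≤ 1 := hball hwball
    rw [fF_smul_basis, div_le_one (aF_sq_pos n)] at hwS
    nlinarith [aF_pos n]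

lemma norm_zF (n : ℕ) : ‖aF n • (e n : X)‖ = aF n := by
  rw [norm_smul, norm_basis, mul_one, Real.norm_eq_abs, abs_of_pos (aF_pos n)]

lemma frontier_norm_gt_one : ∀ w ∈ frontier (SF e), 1 < ‖w‖ := by
  intro w hw
  by_contra h
  push_neg at h
  have hwin : w ∈ interior (SF e) :=
    closedBall_subset_interior_SF e (by rwa [mem_closedBall, dist_zero_right])
  rw [(SF_closed e).frontier_eq] at hw
  exact hw.2 hwin

lemma infDist_frontier : Metric.infDist (0:X) (frontier (SF e)) = 1 := by
  have hne : (frontier (SF e)).Nonempty := ⟨_, zF_mem_frontier e 0⟩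
  apply le_antisymm
  · apply le_of_forall_pos_le_add
    intro ε hε
    obtain ⟨n, hn⟩ := exists_pow_lt_of_lt_one hε (by norm_num : (1/2:ℝ) < 1)
    have h1 : Metric.infDist (0:X) (frontier (SF e)) ≤ dist (0:X) (aF n • (e n : X)) :=
      Metric.infDist_le_dist_of_mem (zF_mem_frontier e n)
    have h2 : dist (0:X) (aF n • (e n : X)) = aF n := by
      rw [dist_zero_left, norm_zF]
    have h3 : aF n ≤ 1 + ε := by
      have h4 : (1/2:ℝ)^(n+1) ≤ (1/2:ℝ)^n :=
        pow_le_pow_of_le_one (by norm_num) (by norm_num) (Nat.le_succ n)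
      have h5 : aF n = 1 + (1/2:ℝ)^(n+1) := by rw [aF, two_rpow_eq]
      rw [h5]; linarith
    linarith [h2 ▸ h1]
  · by_contra h
    push_neg at h
    obtain ⟨w, hw, hwd⟩ := (Metric.infDist_lt_iff hne).mp h
    rw [dist_zero_left] at hwd
    exact absurd hwd (not_lt.mpr (frontier_norm_gt_one e w hw).le)

end Aux

/-- In an infinite-dimensional separable Hilbert space with Hilbert basis `(e_n)`, the
bounded convex body `W = {x : Σₙ ⟨eₙ, x⟩²/(1+2⁻ⁿ)² ≤ 1}` (indices shifted so that the
weights are `1 + 2^{-(n+1)}`, `n = 0, 1, 2, …`) contains the closed unit ball in its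
interior; the distance from `0` to `∂W` equals `1` but is not attained. -/
theorem distance_to_boundary_not_attained
    {X : Type*} [NormedAddCommGroup X] [InnerProductSpace ℝ X] [CompleteSpace X]
    (e : HilbertBasis ℕ ℝ X)
    (W : Set X)
    (hW : W = {x : X | ∑' n : ℕ, ⟪(e n : X), x⟫ ^ 2 / (1 + (2:ℝ) ^ (-(n:ℝ) - 1)) ^ 2 ≤ 1}) :
    Bornology.IsBounded W ∧ IsClosed W ∧ Convex ℝ W ∧ (interior W).Nonempty ∧
    Metric.closedBall (0:X) 1 ⊆ interior W ∧
    Metric.infDist (0:X) (frontier W) = 1 ∧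
    ∀ z ∈ frontier W, ‖z‖ ≠ 1 := by
  have hWS : W = SF e := hW
  subst hWS
  exact ⟨SF_bounded e, SF_closed e, SF_convex e,
    ⟨0, closedBall_subset_interior_SF e (mem_closedBall_self zero_le_one)⟩,
    closedBall_subset_interior_SF e, infDist_frontier e,
    fun w hw => (frontier_norm_gt_one e w hw).ne'⟩
end

section
/- Let X be a real Hilbert space, let V be a convex body in X of class C¹ with boundary S = ∂V and outer unit normal map N_S : S → S_X, let ω be a modulus of continuity and set φ(t) = ∫₀ᵗ ω(s) ds. Suppose there exists M > 0 such that ‖N_S(x) − N_S(y)‖ ≤ M·ω(‖x − y‖) for all x, y ∈ S. Then for every x ∈ S the set W_x := {p ∈ X : ⟨N_S(x), x − p⟩ ≥ M·φ(2‖x − p‖)} satisfies W_x ⊆ V and S ∩ W_x = {x}. -/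
open scoped RealInnerProductSpace
open Metric Set MeasureTheory

variable {X : Type*} [NormedAddCommGroup X] [InnerProductSpace ℝ X]

/-- `ω : [0,∞) → [0,∞)` is a modulus of continuity: concave, strictly increasing,
vanishing at `0` and tending to `∞` at `∞`. -/
def IsModulus (ω : ℝ → ℝ) : Prop :=
  (∀ t ≥ (0:ℝ), ω t ≥ 0) ∧ ConcaveOn ℝ (Set.Ici 0) ω ∧ StrictMonoOn ω (Set.Ici 0) ∧
    ω 0 = 0 ∧ Filter.Tendsto ω Filter.atTop Filter.atTop

/-- `ωinv` is the inverse on `[0,∞)` of the modulus `ω`. -/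
def IsModulusInverse (ω ωinv : ℝ → ℝ) : Prop :=
  (∀ s ≥ (0:ℝ), ωinv s ≥ 0) ∧ (∀ t ≥ (0:ℝ), ωinv (ω t) = t) ∧ ∀ s ≥ (0:ℝ), ω (ωinv s) = s

private lemma modInt {ω : ℝ → ℝ} (hmono : MonotoneOn ω (Set.Ici 0))
    {a b : ℝ} (ha : 0 ≤ a) (hab : a ≤ b) : IntervalIntegrable ω volume a b := by
  apply MonotoneOn.intervalIntegrable
  intro x hx y hy hxy
  rw [Set.uIcc_of_le hab] at hx hy
  exact hmono (ha.trans hx.1) (ha.trans hy.1) hxy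

private lemma modIntLower {ω : ℝ → ℝ} (hmono : MonotoneOn ω (Set.Ici 0))
    {a b : ℝ} (ha : 0 ≤ a) (hab : a ≤ b) :
    (b - a) * ω a ≤ ∫ s in a..b, ω s := by
  have h1 : (∫ _ in a..b, ω a) ≤ ∫ s in a..b, ω s := by
    refine intervalIntegral.integral_mono_on hab intervalIntegrable_const (modInt hmono ha hab) ?_
    intro x hx
    exact hmono ha (ha.trans hx.1) hx.1
  simpa [smul_eq_mul] using h1

private lemma modIntUpper {ω : ℝ → ℝ} (hmono : MonotoneOn ω (Set.Ici 0))
    {a b : ℝ} (ha : 0 ≤ a) (hab : a ≤ b) :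
    (∫ s in a..b, ω s) ≤ (b - a) * ω b := by
  have h1 : (∫ s in a..b, ω s) ≤ ∫ _ in a..b, ω b := by
    refine intervalIntegral.integral_mono_on hab (modInt hmono ha hab) intervalIntegrable_const ?_
    intro x hx
    exact hmono (ha.trans hx.1) (ha.trans hab) hx.2
  simpa [smul_eq_mul] using h1

private lemma modPhiScale {ω : ℝ → ℝ} (hmono : MonotoneOn ω (Set.Ici 0))
    (h0 : ∀ t ≥ (0:ℝ), ω t ≥ 0) {s c : ℝ} (hs0 : 0 ≤ s) (hs1 : s ≤ 1) (hc : 0 ≤ c) :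
    (∫ u in (0:ℝ)..(s * c), ω u) ≤ s * ∫ u in (0:ℝ)..c, ω u := by
  have hac : s * c ≤ c := by nlinarith
  have ha : 0 ≤ s * c := by positivity
  have hsplit : (∫ u in (0:ℝ)..c, ω u) =
      (∫ u in (0:ℝ)..(s*c), ω u) + ∫ u in (s*c)..c, ω u :=
    (intervalIntegral.integral_add_adjacent_intervals (modInt hmono le_rfl ha)
      (modInt hmono ha hac)).symm
  have hup : (∫ u in (0:ℝ)..(s*c), ω u) ≤ (s*c - 0) * ω (s*c) := modIntUpper hmono le_rfl ha
  have hlow : (c - s*c) * ω (s*c) ≤ ∫ u in (s*c)..c, ω u := modIntLower hmono ha hac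
  have hwnn : 0 ≤ ω (s*c) := h0 _ ha
  nlinarith [hsplit, hup, hlow]

set_option maxHeartbeats 1000000 in
theorem holder_normal_implies_supporting_paraboloids [CompleteSpace X]
    (V : Set X) (hV : IsConvexBody V) (NS : X → X)
    (hNS : ∀ x ∈ frontier V, IsOutwardNormal V x (NS x) ∧
      ∀ u, IsOutwardNormal V x u → u = NS x)
    (ω : ℝ → ℝ) (hω : IsModulus ω)
    (M : ℝ) (hM : 0 < M)
    (h : ∀ x ∈ frontier V, ∀ y ∈ frontier V, ‖NS x - NS y‖ ≤ M * ω ‖x - y‖) :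
    ∀ x ∈ frontier V,
      {p : X | ⟪NS x, x - p⟫ ≥ M * ∫ s in (0:ℝ)..(2 * ‖x - p‖), ω s} ⊆ V ∧
      frontier V ∩ {p : X | ⟪NS x, x - p⟫ ≥ M * ∫ s in (0:ℝ)..(2 * ‖x - p‖), ω s} = {x} := by
  obtain ⟨hVcl, hVconv, -⟩ := hV
  obtain ⟨hω0, -, hωsm, hωzero, -⟩ := hω
  have hmono : MonotoneOn ω (Set.Ici 0) := hωsm.monotoneOn
  have hVsub : frontier V ⊆ V := by rw [hVcl.frontier_eq]; exact diff_subset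
  have hωpos : ∀ t : ℝ, 0 < t → 0 < ω t := by
    intro t ht
    have := hωsm (Set.self_mem_Ici) (Set.mem_Ici.2 ht.le) ht
    rwa [hωzero] at this
  have phi_pos : ∀ c : ℝ, 0 < c → 0 < ∫ s in (0:ℝ)..c, ω s := by
    intro c hc
    have h2 : c / 2 ≤ c := by linarith
    have h2' : (0:ℝ) ≤ c / 2 := by linarith
    have hsplit : (∫ s in (0:ℝ)..c, ω s) =
        (∫ s in (0:ℝ)..(c/2), ω s) + ∫ s in (c/2)..c, ω s :=
      (intervalIntegral.integral_add_adjacent_intervals (modInt hmono le_rfl h2')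
        (modInt hmono h2' h2)).symm
    have hlow : (c - c/2) * ω (c/2) ≤ ∫ s in (c/2)..c, ω s := modIntLower hmono h2' h2
    have hnn : 0 ≤ ∫ s in (0:ℝ)..(c/2), ω s := by
      have := modIntLower hmono le_rfl h2'
      rw [hωzero] at this
      simpa using this
    have hωc : 0 < ω (c/2) := hωpos _ (by linarith)
    nlinarith
  -- strict key lemma
  have key : ∀ x ∈ frontier V, ∀ y ∈ frontier V, y ≠ x →
      ⟪NS x, x - y⟫ < M * ∫ s in (0:ℝ)..(2 * ‖x - y‖), ω s := by
    intro x hx y hy hyx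
    have hτ : 0 < ‖x - y‖ := by
      rw [norm_pos_iff, sub_ne_zero]
      exact fun e => hyx e.symm
    have h3 : ⟪NS y, x - y⟫ ≤ 0 := (hNS y hy).1.2 x (hVsub hx)
    have h2 : ⟪NS x - NS y, x - y⟫ ≤ ‖NS x - NS y‖ * ‖x - y‖ := real_inner_le_norm _ _
    have h4 : ‖NS x - NS y‖ ≤ M * ω ‖x - y‖ := h x hx y hy
    have h1 : ⟪NS x, x - y⟫ ≤ M * ω ‖x - y‖ * ‖x - y‖ := by
      have e : ⟪NS x, x - y⟫ = ⟪NS x - NS y, x - y⟫ + ⟪NS y, x - y⟫ := by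
        rw [inner_sub_left]; ring
      have := mul_le_mul_of_nonneg_right h4 hτ.le
      linarith
    have hsplit : (∫ s in (0:ℝ)..(2 * ‖x - y‖), ω s) =
        (∫ s in (0:ℝ)..‖x - y‖, ω s) + ∫ s in ‖x - y‖..(2 * ‖x - y‖), ω s :=
      (intervalIntegral.integral_add_adjacent_intervals (modInt hmono le_rfl hτ.le)
        (modInt hmono hτ.le (by linarith))).symm
    have h5 : (2 * ‖x - y‖ - ‖x - y‖) * ω ‖x - y‖ ≤ ∫ s in ‖x - y‖..(2 * ‖x - y‖), ω s :=
      modIntLower hmono hτ.le (by linarith)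
    have h6 : 0 < ∫ s in (0:ℝ)..‖x - y‖, ω s := phi_pos _ hτ
    have h7 : ω ‖x - y‖ * ‖x - y‖ < ∫ s in (0:ℝ)..(2 * ‖x - y‖), ω s := by
      rw [hsplit]; nlinarith
    calc ⟪NS x, x - y⟫ ≤ M * ω ‖x - y‖ * ‖x - y‖ := h1
      _ = M * (ω ‖x - y‖ * ‖x - y‖) := by ring
      _ < M * ∫ s in (0:ℝ)..(2 * ‖x - y‖), ω s := mul_lt_mul_of_pos_left h7 hM
  intro x hx
  have hxV : x ∈ V := hVsub hx
  have hWsub : {p : X | ⟪NS x, x - p⟫ ≥ M * ∫ s in (0:ℝ)..(2 * ‖x - p‖), ω s} ⊆ V := by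
    intro p hp
    by_contra hpV
    simp only [mem_setOf_eq] at hp
    have hxp : x ≠ p := fun e => hpV (e ▸ hxV)
    have ht : 0 < ‖p - x‖ := by rw [norm_pos_iff, sub_ne_zero]; exact fun e => hxp e.symm
    set e : X := p - x with he
    set t : ℝ := ‖e‖ with htdef
    have hxpt : ‖x - p‖ = t := by rw [htdef, he, norm_sub_rev]
    rw [hxpt] at hp
    have hinner : ∀ s : ℝ, ⟪NS x, x - (x + s • e)⟫ = s * ⟪NS x, x - p⟫ := by
      intro s
      have h1 : x - (x + s • e) = s • (x - p) := by
        rw [he, smul_sub, smul_sub]; abel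
      rw [h1, real_inner_smul_right]
    have hnorm : ∀ s : ℝ, 0 ≤ s → ‖x - (x + s • e)‖ = s * t := by
      intro s hs
      have h1 : x - (x + s • e) = (-s) • e := by
        rw [neg_smul]; abel
      rw [h1, norm_smul, norm_neg, Real.norm_eq_abs, abs_of_nonneg hs]
    set T : Set ℝ := Set.Icc (0:ℝ) 1 ∩ {s : ℝ | x + s • e ∈ V} with hT
    have hT0 : (0:ℝ) ∈ T := ⟨⟨le_rfl, zero_le_one⟩, by simpa using hxV⟩
    have hTne : T.Nonempty := ⟨0, hT0⟩
    have hTbdd : BddAbove T := ⟨1, fun s hs => hs.1.2⟩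
    have hTclosed : IsClosed T := by
      refine IsClosed.inter isClosed_Icc (IsClosed.preimage ?_ hVcl)
      exact continuous_const.add (continuous_id.smul continuous_const)
    set s₀ := sSup T with hs₀def
    have hs₀T : s₀ ∈ T := hTclosed.csSup_mem hTne hTbdd
    have hs₀0 : 0 ≤ s₀ := le_csSup hTbdd hT0
    have hs₀1 : s₀ < 1 := by
      rcases lt_or_eq_of_le hs₀T.1.2 with h' | h'
      · exact h'
      · exfalso
        apply hpV
        have h2 := hs₀T.2
        rw [h'] at h2
        simp only [mem_setOf_eq, one_smul] at h2
        have : x + e = p := by rw [he]; abel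
        rwa [this] at h2
    rcases eq_or_lt_of_le hs₀0 with hcase | hcase
    · -- s₀ = 0 : the segment leaves V immediately; use a projection argument at s = 1/4
      have hp'V : x + (1/4 : ℝ) • e ∉ V := by
        intro hmem
        have hmemT : (1/4:ℝ) ∈ T := ⟨⟨by norm_num, by norm_num⟩, hmem⟩
        have := le_csSup hTbdd hmemT
        rw [← hs₀def, ← hcase] at this
        norm_num at this
      set p' : X := x + (1/4 : ℝ) • e with hp'def
      obtain ⟨q, hqV, hqmin⟩ :=
        exists_norm_eq_iInf_of_complete_convex ⟨x, hxV⟩ hVcl.isComplete hVconv p'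
      have hproj : ∀ w ∈ V, ⟪p' - q, w - q⟫ ≤ 0 :=
        (norm_eq_iInf_iff_real_inner_le_zero hVconv hqV).1 hqmin
      set d : ℝ := ‖p' - q‖ with hd
      have hd0 : 0 < d := by
        rw [hd, norm_pos_iff, sub_ne_zero]
        exact fun e' => hp'V (e' ▸ hqV)
      have hdle : d ≤ ‖p' - x‖ := by
        rw [hqmin]
        exact ciInf_le ⟨0, Set.forall_mem_range.2 fun _ => norm_nonneg _⟩ (⟨x, hxV⟩ : V)
      have hp'x : ‖p' - x‖ = t/4 := by
        have h1 : p' - x = (1/4:ℝ) • e := by rw [hp'def]; abel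
        rw [h1, norm_smul, Real.norm_eq_abs,
          abs_of_nonneg (by norm_num : (0:ℝ) ≤ (1/4:ℝ)), ← htdef]
        ring
      set u : X := d⁻¹ • (p' - q) with hu
      have hu1 : ‖u‖ = 1 := by
        rw [hu, norm_smul, norm_inv, Real.norm_eq_abs, abs_of_pos hd0, ← hd]
        field_simp
      have huout : ∀ w ∈ V, ⟪u, w - q⟫ ≤ 0 := by
        intro w hw
        rw [hu, real_inner_smul_left]
        exact mul_nonpos_of_nonneg_of_nonpos (inv_nonneg.2 hd0.le) (hproj w hw)
      have hqfr : q ∈ frontier V := by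
        rw [hVcl.frontier_eq]
        refine ⟨hqV, fun hint => ?_⟩
        obtain ⟨ε, hε, hball⟩ := Metric.isOpen_iff.1 isOpen_interior q hint
        have hwV : q + (ε/2) • u ∈ V := by
          refine interior_subset (hball ?_)
          rw [mem_ball, dist_eq_norm]
          have : q + (ε/2) • u - q = (ε/2) • u := by abel
          rw [this, norm_smul, Real.norm_eq_abs, abs_of_pos (by linarith), hu1]
          linarith
        have h1 := huout _ hwV
        have h2 : q + (ε/2) • u - q = (ε/2) • u := by abel
        rw [h2, real_inner_smul_right, real_inner_self_eq_norm_sq, hu1] at h1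
        nlinarith
      have hNq : NS q = u := ((hNS q hqfr).2 u ⟨hu1, huout⟩).symm
      have hr : ‖x - q‖ ≤ t/2 := by
        have h1 : x - q = (x - p') + (p' - q) := by abel
        have h2 : ‖x - q‖ ≤ ‖x - p'‖ + ‖p' - q‖ := by rw [h1]; exact norm_add_le _ _
        have h3 : ‖x - p'‖ = t/4 := by rw [norm_sub_rev]; exact hp'x
        rw [hp'x] at hdle
        rw [h3, ← hd] at h2
        linarith
      have hNxu : ‖NS x - u‖ ≤ M * ω (t/2) := by
        calc ‖NS x - u‖ = ‖NS x - NS q‖ := by rw [hNq]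
          _ ≤ M * ω ‖x - q‖ := h x hx q hqfr
          _ ≤ M * ω (t/2) := by
              have := hmono (Set.mem_Ici.2 (norm_nonneg (x - q)))
                (Set.mem_Ici.2 (by positivity : (0:ℝ) ≤ t/2)) hr
              exact mul_le_mul_of_nonneg_left this hM.le
      have hue : 0 < ⟪u, e⟫ := by
        have h1 : ⟪u, p' - q⟫ = d := by
          rw [hu, real_inner_smul_left, real_inner_self_eq_norm_sq, ← hd]
          field_simp
        have h2 : (0:ℝ) ≤ ⟪u, q - x⟫ := by
          have h3 := huout x hxV
          have h4 : q - x = -(x - q) := by abel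
          rw [h4, inner_neg_right]
          linarith
        have h3 : ⟪u, p' - x⟫ = ⟪u, p' - q⟫ + ⟪u, q - x⟫ := by
          rw [← inner_add_right]
          congr 1
          abel
        have h4 : ⟪u, p' - x⟫ = (1/4 : ℝ) * ⟪u, e⟫ := by
          have h5 : p' - x = (1/4:ℝ) • e := by rw [hp'def]; abel
          rw [h5, real_inner_smul_right]
        nlinarith
      have hfinal1 : -(M * ω (t/2) * t) < ⟪NS x, e⟫ := by
        have h1 : ⟪NS x, e⟫ = ⟪NS x - u, e⟫ + ⟪u, e⟫ := by rw [inner_sub_left]; ring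
        have h2 : -(‖NS x - u‖ * ‖e‖) ≤ ⟪NS x - u, e⟫ := by
          have h3 := abs_real_inner_le_norm (NS x - u) e
          have h4 := neg_abs_le ⟪NS x - u, e⟫
          linarith
        have h5 := mul_le_mul_of_nonneg_right hNxu (norm_nonneg e)
        rw [← htdef] at h5
        linarith
      have hip : ⟪NS x, x - p⟫ = -⟪NS x, e⟫ := by
        have h1 : x - p = -e := by rw [he]; abel
        rw [h1, inner_neg_right]
      have hφbig : t * ω (t/2) + (t/2) * ω (t/2) ≤ ∫ s in (0:ℝ)..(2*t), ω s := by
        have ht2 : (0:ℝ) ≤ t/2 := by linarith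
        have ht2' : t/2 ≤ 2*t := by linarith
        have hsplit : (∫ s in (0:ℝ)..(2*t), ω s) =
            (∫ s in (0:ℝ)..(t/2), ω s) + ∫ s in (t/2)..(2*t), ω s :=
          (intervalIntegral.integral_add_adjacent_intervals (modInt hmono le_rfl ht2)
            (modInt hmono ht2 ht2')).symm
        have hlow : (2*t - t/2) * ω (t/2) ≤ ∫ s in (t/2)..(2*t), ω s :=
          modIntLower hmono ht2 ht2'
        have hnn : 0 ≤ ∫ s in (0:ℝ)..(t/2), ω s := by
          have := modIntLower hmono le_rfl ht2
          rw [hωzero] at this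
          simpa using this
        rw [hsplit]
        nlinarith
      have hωt2 : 0 < ω (t/2) := hωpos _ (by positivity)
      have hMI := mul_le_mul_of_nonneg_left hφbig hM.le
      have hpos : 0 < M * (t/2 * ω (t/2)) :=
        mul_pos hM (mul_pos (by linarith) hωt2)
      nlinarith [hp, hip, hfinal1, hMI, hpos]
    · -- 0 < s₀ : the exit point is a boundary point in W distinct from x
      set y : X := x + s₀ • e with hy
      have hyV : y ∈ V := hs₀T.2
      have hyfr : y ∈ frontier V := by
        rw [hVcl.frontier_eq]
        refine ⟨hyV, fun hint => ?_⟩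
        obtain ⟨ε, hε, hball⟩ := Metric.isOpen_iff.1 isOpen_interior y hint
        set s₁ : ℝ := min 1 (s₀ + ε / (2 * t)) with hs₁def
        have hεt : 0 < ε / (2 * t) := by positivity
        have hs₁gt : s₀ < s₁ := lt_min hs₀1 (by linarith)
        have hs₁mem : s₁ ∈ T := by
          refine ⟨⟨by positivity, min_le_left _ _⟩, ?_⟩
          have hdist : x + s₁ • e ∈ ball y ε := by
            rw [mem_ball, dist_eq_norm]
            have h1 : x + s₁ • e - y = (s₁ - s₀) • e := by
              rw [hy, sub_smul]; abel
            rw [h1, norm_smul, Real.norm_eq_abs, abs_of_pos (by linarith), ← htdef]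
            have h2 : s₁ - s₀ ≤ ε / (2 * t) := by
              have := min_le_right (1:ℝ) (s₀ + ε / (2 * t))
              rw [← hs₁def] at this
              linarith
            have h3 : (s₁ - s₀) * t ≤ (ε / (2 * t)) * t :=
              mul_le_mul_of_nonneg_right h2 (by linarith)
            have h4 : (ε / (2 * t)) * t = ε / 2 := by field_simp
            linarith
          show x + s₁ • e ∈ V
          exact interior_subset (hball hdist)
        have := le_csSup hTbdd hs₁mem
        rw [← hs₀def] at this
        linarith
      have hynorm : ‖x - y‖ = s₀ * t := by
        rw [hy]; exact hnorm s₀ hs₀0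
      have hyx : y ≠ x := by
        intro h'
        rw [hy] at h'
        have h2 : s₀ • e = 0 := by
          have := congrArg (· - x) h'
          simpa using this
        rcases smul_eq_zero.1 h2 with h3 | h3
        · exact absurd h3.symm (ne_of_lt hcase)
        · have : t = 0 := by rw [htdef, h3, norm_zero]
          linarith
      have hyW : M * (∫ s in (0:ℝ)..(2 * ‖x - y‖), ω s) ≤ ⟪NS x, x - y⟫ := by
        have h1 : ⟪NS x, x - y⟫ = s₀ * ⟪NS x, x - p⟫ := by rw [hy]; exact hinner s₀
        have h2 : 2 * ‖x - y‖ = s₀ * (2 * t) := by rw [hynorm]; ring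
        have h3 : (∫ s in (0:ℝ)..(s₀ * (2*t)), ω s) ≤ s₀ * ∫ s in (0:ℝ)..(2*t), ω s :=
          modPhiScale hmono hω0 hs₀0 hs₀1.le (by positivity)
        have h4 : s₀ * (M * ∫ s in (0:ℝ)..(2*t), ω s) ≤ s₀ * ⟪NS x, x - p⟫ :=
          mul_le_mul_of_nonneg_left hp hs₀0
        rw [h1, h2]
        calc M * ∫ s in (0:ℝ)..(s₀ * (2*t)), ω s
            ≤ M * (s₀ * ∫ s in (0:ℝ)..(2*t), ω s) := mul_le_mul_of_nonneg_left h3 hM.le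
          _ = s₀ * (M * ∫ s in (0:ℝ)..(2*t), ω s) := by ring
          _ ≤ s₀ * ⟪NS x, x - p⟫ := h4
      have := key x hx y hyfr hyx
      linarith
  refine ⟨hWsub, ?_⟩
  apply Subset.antisymm
  · rintro y ⟨hyfr, hyW⟩
    simp only [mem_setOf_eq] at hyW
    rw [mem_singleton_iff]
    by_contra hne
    have := key x hx y hyfr hne
    linarith
  · intro y hy
    rw [mem_singleton_iff] at hy
    subst hy
    refine ⟨hx, ?_⟩
    simp [mem_setOf_eq, sub_self, intervalIntegral.integral_same]
end

section
/- Let X be a real Hilbert space, let V be a convex body in X of class C¹ with boundary S = ∂V and outer unit normal map N_S : S → S_X, let ω be a modulus of continuity with inverse ω⁻¹, and set φ(t) = ∫₀ᵗ ω(s) ds. Suppose there exists M > 0 such that for every x ∈ S the set W_x := {p ∈ X : ⟨N_S(x), x − p⟩ ≥ M·φ(2‖x − p‖)} satisfies W_x ⊆ V and S ∩ W_x = {x}. Then ⟨N_S(y), y − x⟩ ≥ (‖N_S(x) − N_S(y)‖/2)·ω⁻¹(‖N_S(x) − N_S(y)‖/(4M)) for all x, y ∈ S. -/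
open scoped RealInnerProductSpace
open Metric Set

variable {X : Type*} [NormedAddCommGroup X] [InnerProductSpace ℝ X]

lemma key_integral_le (ω : ℝ → ℝ) (hconc : ConcaveOn ℝ (Set.Ici 0) ω)
    (hmono : MonotoneOn ω (Set.Ici 0)) (r : ℝ) (hr : 0 ≤ r) :
    ∫ s in (0:ℝ)..(2*r), ω s ≤ 2 * r * ω r := by
  have h2r : (0:ℝ) ≤ 2 * r := by linarith
  have hint : IntervalIntegrable ω MeasureTheory.volume 0 (2*r) := by
    apply MonotoneOn.intervalIntegrable
    apply hmono.mono
    rw [uIcc_of_le h2r]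
    exact fun t ht => ht.1
  have hint2 : IntervalIntegrable (fun s => ω (2*r - s)) MeasureTheory.volume 0 (2*r) := by
    have := (hint.comp_sub_left (2*r)).symm
    simp only [sub_zero, sub_self] at this
    exact this
  have heq : (∫ s in (0:ℝ)..(2*r), ω (2*r - s)) = ∫ s in (0:ℝ)..(2*r), ω s := by
    have := intervalIntegral.integral_comp_sub_left (a := (0:ℝ)) (b := 2*r) ω (2*r)
    simp only [sub_zero, sub_self] at this
    exact this
  have hsum : (∫ s in (0:ℝ)..(2*r), (ω s + ω (2*r - s))) ≤ ∫ s in (0:ℝ)..(2*r), (2 * ω r) := by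
    apply intervalIntegral.integral_mono_on h2r (hint.add hint2) intervalIntegrable_const
    intro s hs
    have h1 : s ∈ Set.Ici (0:ℝ) := hs.1
    have h2 : 2*r - s ∈ Set.Ici (0:ℝ) := by simp; linarith [hs.2]
    have := hconc.2 h1 h2 (by norm_num : (0:ℝ) ≤ 1/2) (by norm_num : (0:ℝ) ≤ 1/2) (by norm_num)
    simp only [smul_eq_mul] at this
    have hmid : (1/2 : ℝ) * s + (1/2 : ℝ) * (2*r - s) = r := by ring
    rw [hmid] at this
    linarith
  rw [intervalIntegral.integral_add hint hint2, heq, intervalIntegral.integral_const] at hsum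
  simp only [smul_eq_mul, sub_zero] at hsum
  linarith


theorem supporting_paraboloids_imply_inequality [CompleteSpace X]
    (V : Set X) (hV : IsConvexBody V) (NS : X → X)
    (hNS : ∀ x ∈ frontier V, IsOutwardNormal V x (NS x) ∧
      ∀ u, IsOutwardNormal V x u → u = NS x)
    (ω ωinv : ℝ → ℝ) (hω : IsModulus ω) (hωinv : IsModulusInverse ω ωinv)
    (M : ℝ) (hM : 0 < M)
    (h : ∀ x ∈ frontier V,
      {p : X | ⟪NS x, x - p⟫ ≥ M * ∫ s in (0:ℝ)..(2 * ‖x - p‖), ω s} ⊆ V ∧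
      frontier V ∩ {p : X | ⟪NS x, x - p⟫ ≥ M * ∫ s in (0:ℝ)..(2 * ‖x - p‖), ω s} = {x}) :
    ∀ x ∈ frontier V, ∀ y ∈ frontier V,
      ⟪NS y, y - x⟫ ≥ ‖NS x - NS y‖ / 2 * ωinv (‖NS x - NS y‖ / (4 * M)) := by
  intro x hx y hy
  obtain ⟨hNx, _⟩ := hNS x hx
  obtain ⟨hNy, _⟩ := hNS y hy
  have hxV : x ∈ V := by
    have := frontier_subset_closure (s := V) hx
    rwa [hV.1.closure_eq] at this
  set u := NS x with hu
  set v := NS y with hv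
  set d := ‖u - v‖ with hd
  have hd0 : 0 ≤ d := norm_nonneg _
  have huv : ⟪u, v⟫ = 1 - d ^ 2 / 2 := by
    have hn : ‖u - v‖ ^ 2 = ‖u‖ ^ 2 - 2 * ⟪u, v⟫ + ‖v‖ ^ 2 := by
      rw [norm_sub_sq_real]
    rw [hNx.1, hNy.1] at hn
    nlinarith [hn]
  rcases eq_or_lt_of_le hd0 with hdz | hdpos
  · -- d = 0 case
    have hzero : ωinv (d / (4 * M)) = 0 := by
      have he : d / (4 * M) = ω 0 := by rw [← hdz, hω.2.2.2.1]; norm_num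
      rw [he, hωinv.2.1 0 le_rfl]
    have h1 := hNy.2 x hxV
    have h2 : ⟪v, x - y⟫ = -⟪v, y - x⟫ := by
      rw [show x - y = -(y - x) from by abel, inner_neg_right]
    rw [hzero, mul_zero, ge_iff_le]
    linarith
  · -- d > 0 case
    set r := ωinv (d / (4 * M)) with hrdef
    have hdM : 0 ≤ d / (4 * M) := by positivity
    have hr0 : 0 ≤ r := hωinv.1 _ hdM
    have hωr : ω r = d / (4 * M) := hωinv.2.2 _ hdM
    set p := x + (r / d) • (v - u) with hp
    have hxp : x - p = -((r / d) • (v - u)) := by rw [hp]; abel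
    have hnorm : ‖x - p‖ = r := by
      rw [hxp, norm_neg, norm_smul, Real.norm_eq_abs, abs_of_nonneg (by positivity),
        norm_sub_rev, ← hd]
      field_simp
    have huvu : ⟪u, v - u⟫ = -(d ^ 2 / 2) := by
      rw [inner_sub_right, real_inner_self_eq_norm_sq, hNx.1, huv]; ring
    have hvvu : ⟪v, v - u⟫ = d ^ 2 / 2 := by
      rw [inner_sub_right, real_inner_self_eq_norm_sq, hNy.1, real_inner_comm, huv]; ring
    have hip : ⟪u, x - p⟫ = r * d / 2 := by
      rw [hxp, inner_neg_right, real_inner_smul_right, huvu]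
      field_simp
    have hmono : MonotoneOn ω (Set.Ici 0) := hω.2.2.1.monotoneOn
    have hkey : ∫ s in (0:ℝ)..(2 * r), ω s ≤ 2 * r * ω r :=
      key_integral_le ω hω.2.1 hmono r hr0
    have hpW : p ∈ {p : X | ⟪NS x, x - p⟫ ≥ M * ∫ s in (0:ℝ)..(2 * ‖x - p‖), ω s} := by
      show ⟪u, x - p⟫ ≥ M * ∫ s in (0:ℝ)..(2 * ‖x - p‖), ω s
      rw [hip, hnorm]
      have h1 : M * ∫ s in (0:ℝ)..(2 * r), ω s ≤ M * (2 * r * ω r) := by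
        exact mul_le_mul_of_nonneg_left hkey hM.le
      have h2 : M * (2 * r * ω r) = r * d / 2 := by
        rw [hωr]; field_simp; ring
      linarith
    have hpV : p ∈ V := (h x hx).1 hpW
    have hle : ⟪v, p - y⟫ ≤ 0 := hNy.2 p hpV
    have hsplit : ⟪v, p - y⟫ = ⟪v, p - x⟫ - ⟪v, y - x⟫ := by
      rw [← inner_sub_right]; congr 1; abel
    have hpx : ⟪v, p - x⟫ = r * d / 2 := by
      have : p - x = (r / d) • (v - u) := by rw [hp]; abel
      rw [this, real_inner_smul_right, hvvu]
      field_simp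
    rw [hsplit, hpx] at hle
    rw [ge_iff_le]
    have hgoal : d / 2 * r = r * d / 2 := by ring
    linarith
end

section
/- Let X be a real Hilbert space with unit sphere S_X, let C be a subset of X, let N : C → S_X be a mapping, let r > 0, and define V to be the closed convex hull of the union of the closed balls B(y − r·N(y), r) over all y ∈ C. Then for every x ∈ ∂V there exists z_x ∈ V such that the closed ball B(z_x, r) is contained in V and x ∈ ∂B(z_x, r), i.e., ‖x − z_x‖ = r. -/
open scoped RealInnerProductSpace
open Metric Set
open scoped Pointwise

variable {X : Type*} [NormedAddCommGroup X] [InnerProductSpace ℝ X]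

set_option linter.unusedSectionVars false

/-- The union of balls of radius `r` centered in `A` is `A + closedBall 0 r`. -/
lemma biUnion_closedBall_eq_add (A : Set X) (r : ℝ) :
    (⋃ a ∈ A, Metric.closedBall a r) = A + Metric.closedBall (0 : X) r := by
  ext x
  simp only [mem_iUnion, Set.mem_add, mem_closedBall, exists_prop]
  constructor
  · rintro ⟨a, ha, hx⟩
    exact ⟨a, ha, x - a, by simpa [dist_eq_norm, dist_comm] using hx, by abel⟩
  · rintro ⟨a, ha, b, hb, rfl⟩
    exact ⟨a, ha, by simpa [dist_eq_norm] using hb⟩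

/-- The closure of `K + closedBall 0 r` is the `r`-cthickening of `K`. -/
lemma closure_add_closedBall_eq_cthickening (K : Set X) {r : ℝ} (hr : 0 < r) :
    closure (K + Metric.closedBall (0 : X) r) = Metric.cthickening r K := by
  rcases K.eq_empty_or_nonempty with rfl | hK
  · simp [Set.empty_add]
  apply le_antisymm
  · refine closure_minimal ?_ Metric.isClosed_cthickening
    rintro x ⟨k, hk, b, hb, rfl⟩
    refine Metric.mem_cthickening_of_dist_le _ k r _ hk ?_
    simpa [dist_eq_norm, dist_comm] using hb
  · intro x hx
    rw [Metric.mem_closure_iff]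
    intro ε hε
    have hle : Metric.infDist x K ≤ r := by
      rw [Metric.mem_cthickening_iff] at hx
      have := ENNReal.toReal_mono ENNReal.ofReal_ne_top hx
      rwa [← Metric.infDist, ENNReal.toReal_ofReal hr.le] at this
    have hlt : Metric.infDist x K < r + ε / 2 := lt_of_le_of_lt hle (by linarith)
    obtain ⟨k, hk, hdk⟩ := (Metric.infDist_lt_iff hK).1 hlt
    set d := dist x k with hd
    have hnorm : ‖x - k‖ = d := by rw [hd, dist_eq_norm]
    by_cases hdr : d ≤ r
    · refine ⟨x, ⟨k, hk, x - k, ?_, by abel_nf⟩, by simpa using hε⟩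
      rw [mem_closedBall, dist_zero_right, hnorm]; exact hdr
    · push_neg at hdr
      have hd0 : 0 < d := lt_trans hr hdr
      set t : ℝ := r / d with ht
      have htd : t * d = r := by rw [ht]; exact div_mul_cancel₀ r hd0.ne'
      refine ⟨k + t • (x - k), ⟨k, hk, t • (x - k), ?_, rfl⟩, ?_⟩
      · rw [mem_closedBall, dist_zero_right, norm_smul, Real.norm_eq_abs,
          abs_of_pos (div_pos hr hd0), ← ht, hnorm, htd]
      · have hx' : x - (k + t • (x - k)) = (1 - t) • (x - k) := by
          rw [sub_smul, one_smul]; abel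
        rw [dist_eq_norm, hx', norm_smul, Real.norm_eq_abs,
          abs_of_nonneg (by rw [sub_nonneg, ht]; exact (div_le_one hd0).2 hdr.le), hnorm]
        have h1 : (1 - t) * d = d - r := by rw [sub_mul, one_mul, htd]
        rw [h1]; linarith

theorem balls_roll_freely_in_hull_of_balls [CompleteSpace X]
    (C : Set X) (N : X → X) (hN : ∀ y ∈ C, ‖N y‖ = 1) (r : ℝ) (hr : 0 < r)
    (V : Set X)
    (hV : V = closure (convexHull ℝ (⋃ y ∈ C, Metric.closedBall (y - r • N y) r))) :
    ∀ x ∈ frontier V, ∃ z ∈ V, Metric.closedBall z r ⊆ V ∧ ‖x - z‖ = r := by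
  intro x hx
  set A : Set X := (fun y => y - r • N y) '' C with hA
  have hU : (⋃ y ∈ C, Metric.closedBall (y - r • N y) r) = ⋃ a ∈ A, Metric.closedBall a r := by
    simp [hA, Set.biUnion_image]
  set D : Set X := closure (convexHull ℝ A) with hD
  have hVD : V = Metric.cthickening r D := by
    rw [hV, hU, biUnion_closedBall_eq_add, convexHull_add,
      (convex_closedBall (0 : X) r).convexHull_eq,
      closure_add_closedBall_eq_cthickening _ hr, hD, Metric.cthickening_closure]
  -- C is nonempty, since otherwise V is empty and so is its frontier
  rcases C.eq_empty_or_nonempty with rfl | hCne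
  · exfalso
    have hVe : V = ∅ := by simp [hV]
    rw [hVe] at hx
    simpa using hx
  have hAne : A.Nonempty := hCne.image _
  have hDne : D.Nonempty := (hAne.mono (subset_convexHull ℝ A)).mono subset_closure
  have hDconv : Convex ℝ D := (convex_convexHull ℝ A).closure
  have hDclosed : IsClosed D := isClosed_closure
  -- x belongs to V (closed) but not to its interior
  have hVclosed : IsClosed V := hVD ▸ Metric.isClosed_cthickening
  have hxV : x ∈ V := hVclosed.closure_eq ▸ hx.1
  have hxint : x ∉ interior V := hx.2
  -- infDist x D = r
  have hle : Metric.infDist x D ≤ r := by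
    have h1 := (Metric.mem_cthickening_iff).1 (hVD ▸ hxV)
    have h2 := ENNReal.toReal_mono ENNReal.ofReal_ne_top h1
    rwa [← Metric.infDist, ENNReal.toReal_ofReal hr.le] at h2
  have heq : Metric.infDist x D = r := by
    by_contra hne
    have hlt : Metric.infDist x D < r := lt_of_le_of_ne hle hne
    have hth : x ∈ Metric.thickening r D := (Metric.mem_thickening_iff_infDist_lt hDne).2 hlt
    exact hxint (mem_interior.2 ⟨Metric.thickening r D,
      hVD ▸ Metric.thickening_subset_cthickening r D, Metric.isOpen_thickening, hth⟩)
  -- nearest point projection onto D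
  obtain ⟨z, hzD, hz⟩ := exists_norm_eq_iInf_of_complete_convex hDne
    (hDclosed.isComplete) hDconv x
  have hzdist : ‖x - z‖ = r := by
    rw [hz, ← heq, Metric.infDist_eq_iInf]
    simp_rw [dist_eq_norm]
  have hDV : D ⊆ V := hVD ▸ Metric.self_subset_cthickening D
  exact ⟨z, hDV hzD, hVD ▸ Metric.closedBall_subset_cthickening hzD r, hzdist⟩
end
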